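/- arXiv:1006.5248 — 9 statements merged into one kernel-verified Lean document; each statement's English description precedes it below -/
import Mathlib

section
/- Let m ≥ 1 be an integer. Every ascending chain I_0 ⊆ I_1 ⊆ I_2 ⊆ ⋯ of GL(∞)-stable ideals of the polynomial ring R = ℂ[x_{i,j} : 1 ≤ i ≤ m, j ∈ ℕ] stabilizes; that is, there exists N such that I_k = I_N for all k ≥ N. -/
/-- The substitution endomorphism of `R = ℂ[x_{i,j} : 1 ≤ i ≤ m, j ∈ ℕ]` attached to an
invertible `n × n` matrix `g`: it sends `x_{i,j}` to `∑_{j' < n} g_{j',j} x_{i,j'}` for `j < n`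
and fixes `x_{i,j}` for `j ≥ n`. -/
noncomputable def glSubst (m n : ℕ) (g : GL (Fin n) ℂ) :
    MvPolynomial (Fin m × ℕ) ℂ →ₐ[ℂ] MvPolynomial (Fin m × ℕ) ℂ :=
  MvPolynomial.aeval fun p =>
    if h : p.2 < n then
      ∑ j' : Fin n, ((g : Matrix (Fin n) (Fin n) ℂ) j' ⟨p.2, h⟩) •
        MvPolynomial.X (p.1, (j' : ℕ))
    else MvPolynomial.X p

/-- An ideal of `R = ℂ[x_{i,j} : 1 ≤ i ≤ m, j ∈ ℕ]` is `GL(∞)`-stable if it is mapped into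
itself by all the substitution automorphisms. -/
def GLStable (m : ℕ) (I : Ideal (MvPolynomial (Fin m × ℕ) ℂ)) : Prop :=
  ∀ (n : ℕ) (g : GL (Fin n) ℂ) (f : MvPolynomial (Fin m × ℕ) ℂ), f ∈ I → glSubst m n g f ∈ I

/-!
Order monomials lexicographically, ranking the variables by column first, so that relabelling
the columns by an increasing map is strictly monotone on monomials. Permutation matrices act by
relabelling columns, and any injective relabelling agrees with a permutation on the finitely many
variables of a polynomial, so the leading monomials of a `GL(∞)`-stable ideal are closed under
divisibility and under increasing relabellings of the columns. Reading a monomial as the word of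
its columns, Higman's lemma makes divisibility up to such relabellings a well-quasi-order, so the
ascending chain of leading-monomial sets stabilizes; nested ideals with the same leading monomials
coincide.
-/

open MvPolynomial Finsupp

open scoped MonomialOrder

theorem Finsupp.Lex.mapDomain_lt_mapDomain {α β N : Type*} [LinearOrder α] [LinearOrder β]
    [AddCommMonoid N] [LT N] {τ : α → β} (hτ : StrictMono τ) {a b : α →₀ N}
    (h : toLex a < toLex b) : toLex (mapDomain τ a) < toLex (mapDomain τ b) := by
  obtain ⟨j, hj, hlt⟩ := Finsupp.Lex.lt_iff.1 h
  refine Finsupp.Lex.lt_iff.2 ⟨τ j, fun d hd => ?_, ?_⟩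
  · by_cases hd' : d ∈ Set.range τ
    · obtain ⟨e, rfl⟩ := hd'
      simpa [mapDomain_apply hτ.injective] using hj e (hτ.lt_iff_lt.1 hd)
    · simp [mapDomain_of_notMem_range _ _ hd']
  · simpa [mapDomain_apply hτ.injective] using hlt

theorem Finsupp.mapDomain_le_of_forall_le {α β : Type*} {τ : α → β} (hτ : τ.Injective)
    {u : α →₀ ℕ} {v : β →₀ ℕ} (h : ∀ a, u a ≤ v (τ a)) : mapDomain τ u ≤ v := by
  intro b
  by_cases hb : b ∈ Set.range τ
  · obtain ⟨a, rfl⟩ := hb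
    simpa [mapDomain_apply hτ] using h a
  · simp [mapDomain_of_notMem_range _ _ hb]

theorem List.Forall₂.getD_le {α : Type*} [Preorder α] [OrderBot α] {l₁ l₂ : List α}
    (h : Forall₂ (· ≤ ·) l₁ l₂) (j : ℕ) : l₁.getD j ⊥ ≤ l₂.getD j ⊥ := by
  induction h generalizing j with
  | nil => simp
  | cons hab _ ih =>
    cases j with
    | zero => simpa using hab
    | succ j => simpa using ih j

theorem List.SublistForall₂.exists_orderEmbedding_getD_le {α : Type*} [Preorder α] [OrderBot α]
    {l₁ l₂ : List α} (h : SublistForall₂ (· ≤ ·) l₁ l₂) :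
    ∃ φ : ℕ ↪o ℕ, ∀ j, l₁.getD j ⊥ ≤ l₂.getD (φ j) ⊥ := by
  obtain ⟨l, hfa, hsub⟩ := List.sublistForall₂_iff.1 h
  obtain ⟨φ, hφ⟩ := List.sublist_iff_exists_orderEmbedding_getElem?_eq.1 hsub
  refine ⟨φ, fun j => (hfa.getD_le j).trans_eq ?_⟩
  simp only [List.getD_eq_getElem?_getD, hφ j]

theorem WellQuasiOrdered.exists_forall_eq_of_monotone {α : Type*} {r : α → α → Prop}
    (hr : WellQuasiOrdered r) {S : ℕ → Set α} (hS : Monotone S)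
    (hup : ∀ k x y, r x y → x ∈ S k → y ∈ S k) : ∃ N, ∀ k, N ≤ k → S k = S N := by
  by_contra! h
  have hnew : ∀ N, ∃ k, N ≤ k ∧ ∃ x ∈ S k, x ∉ S N := fun N => by
    obtain ⟨k, hNk, hne⟩ := h N
    exact ⟨k, hNk, Set.not_subset.1 fun hsub => hne (hsub.antisymm (hS hNk))⟩
  choose next hnext x hx hxN using hnew
  set K : ℕ → ℕ := fun n => next^[n] 0
  have hK : Monotone K := monotone_nat_of_le_succ fun n => by
    simpa only [K, Function.iterate_succ_apply'] using hnext _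
  obtain ⟨i, j, hij, hrij⟩ := hr fun n => x (K n)
  have hxi : x (K i) ∈ S (K j) := by
    refine hS (hK hij) ?_
    simpa only [K, Function.iterate_succ_apply'] using hx (K i)
  exact hxN (K j) (hup _ _ _ hrij hxi)

namespace MonomialOrder

variable {σ σ' R : Type*}

noncomputable def ofEquiv (m : MonomialOrder σ') (e : σ ≃ σ') : MonomialOrder σ where
  syn := m.syn
  toSyn := (Finsupp.domCongr e).trans m.toSyn
  toSyn_monotone a b h := m.toSyn_monotone fun t => h (e.symm t)

theorem ofEquiv_lt_iff (m : MonomialOrder σ') (e : σ ≃ σ') {a b : σ →₀ ℕ} :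
    a ≺[m.ofEquiv e] b ↔ mapDomain e a ≺[m] mapDomain e b := by
  rw [← equivMapDomain_eq_mapDomain, ← equivMapDomain_eq_mapDomain]
  rfl

theorem degree_rename [CommSemiring R] {m : MonomialOrder σ} {m' : MonomialOrder σ'}
    {τ : σ → σ'} (hτ : τ.Injective)
    (hτm : ∀ a b, a ≺[m] b → mapDomain τ a ≺[m'] mapDomain τ b) (f : MvPolynomial σ R) :
    m'.degree (rename τ f) = mapDomain τ (m.degree f) := by
  classical
  by_cases hf : f = 0
  · simp [hf]
  apply m'.toSyn.injective
  apply le_antisymm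
  · rw [degree_le_iff]
    intro c hc
    rw [support_rename_of_injective hτ, Finset.mem_image] at hc
    obtain ⟨a, ha, rfl⟩ := hc
    rcases (le_degree (m := m) ha).lt_or_eq with hlt | heq
    · exact (hτm _ _ hlt).le
    · rw [m.toSyn.injective heq]
  · apply le_degree
    rwa [MvPolynomial.mem_support_iff, coeff_rename_mapDomain _ hτ, coeff_degree_ne_zero_iff]

variable (m : MonomialOrder σ)

def leadingDegrees [CommSemiring R] (I : Ideal (MvPolynomial σ R)) : Set (σ →₀ ℕ) :=
  {d | ∃ f ∈ I, f ≠ 0 ∧ m.degree f = d}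

variable {m}

theorem leadingDegrees_mono [CommSemiring R] : Monotone (m.leadingDegrees (R := R)) :=
  fun _ _ hIJ _ ⟨f, hf, hf0, hfd⟩ => ⟨f, hIJ hf, hf0, hfd⟩

theorem mem_leadingDegrees_of_le [CommSemiring R] [NoZeroDivisors R] [Nontrivial R]
    {I : Ideal (MvPolynomial σ R)} {u v : σ →₀ ℕ}
    (hu : u ∈ m.leadingDegrees I) (huv : u ≤ v) : v ∈ m.leadingDegrees I := by
  classical
  obtain ⟨f, hfI, hf0, rfl⟩ := hu
  have hmon : monomial (v - m.degree f) (1 : R) ≠ 0 := by simp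
  refine ⟨monomial (v - m.degree f) 1 * f, I.mul_mem_left _ hfI, mul_ne_zero hmon hf0, ?_⟩
  rw [degree_mul hmon hf0, degree_monomial, if_neg one_ne_zero, tsub_add_cancel_of_le huv]

theorem degree_sub_smul_lt [Field R] {f g : MvPolynomial σ R} (hg : g ≠ 0)
    (hfg : m.degree g = m.degree f) (hr : f - (m.leadingCoeff f / m.leadingCoeff g) • g ≠ 0) :
    m.degree (f - (m.leadingCoeff f / m.leadingCoeff g) • g) ≺[m] m.degree f := by
  refine lt_of_le_of_ne (degree_sub_le.trans (max_le le_rfl (degree_smul_le.trans_eq ?_))) ?_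
  · rw [hfg]
  · intro h
    apply hr
    rw [← coeff_degree_eq_zero_iff (m := m), m.toSyn.injective h, coeff_sub, coeff_smul,
      ← hfg, ← leadingCoeff, smul_eq_mul, div_mul_cancel₀ _ (leadingCoeff_ne_zero_iff.2 hg),
      leadingCoeff, hfg, sub_self]

theorem ideal_eq_of_le_of_leadingDegrees_subset [Field R] {I J : Ideal (MvPolynomial σ R)}
    (hJI : J ≤ I) (hdeg : m.leadingDegrees I ⊆ m.leadingDegrees J) : J = I := by
  refine le_antisymm hJI fun f hf => ?_
  induction hd : m.toSyn (m.degree f) using WellFoundedLT.induction generalizing f with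
  | ind d ih =>
  by_cases hf0 : f = 0
  · simp [hf0]
  obtain ⟨g, hgJ, hg0, hgf⟩ := hdeg ⟨f, hf, hf0, rfl⟩
  set r := f - (m.leadingCoeff f / m.leadingCoeff g) • g
  have hgr : (m.leadingCoeff f / m.leadingCoeff g) • g ∈ J := Submodule.smul_of_tower_mem _ _ hgJ
  have hrf : f = r + (m.leadingCoeff f / m.leadingCoeff g) • g := (sub_add_cancel _ _).symm
  by_cases hr0 : r = 0
  · rwa [hrf, hr0, zero_add]
  have hrJ : r ∈ J :=
    ih _ (hd ▸ degree_sub_smul_lt hg0 hgf hr0) r (I.sub_mem hf (hJI hgr)) rfl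
  rw [hrf]
  exact J.add_mem hrJ hgr

end MonomialOrder

section ColLex

variable (ι : Type*) [LinearOrder ι] [WellFoundedLT ι]

def colEquiv : ι × ℕ ≃ (Lex (ℕ × ι))ᵒᵈ := (Equiv.prodComm ι ℕ).trans (toLex.trans OrderDual.toDual)

noncomputable def colLex : MonomialOrder (ι × ℕ) := MonomialOrder.lex.ofEquiv (colEquiv ι)

variable {ι}

theorem colLex_mapDomain_lt_mapDomain {φ : ℕ → ℕ} (hφ : StrictMono φ) {a b : ι × ℕ →₀ ℕ}
    (h : a ≺[colLex ι] b) :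
    mapDomain (Prod.map id φ) a ≺[colLex ι] mapDomain (Prod.map id φ) b := by
  set e := colEquiv ι
  have hcomm : e ∘ Prod.map id φ = (e ∘ Prod.map id φ ∘ e.symm) ∘ e := by
    ext p; simp
  have hmono : StrictMono (e ∘ Prod.map id φ ∘ e.symm) := by
    intro x y hxy
    rcases Prod.Lex.lt_iff.1 hxy with hlt | ⟨heq, hlt⟩
    · exact Prod.Lex.lt_iff.2 (Or.inl (hφ hlt))
    · exact Prod.Lex.lt_iff.2 (Or.inr ⟨congrArg φ heq, hlt⟩)
  rw [colLex, MonomialOrder.ofEquiv_lt_iff, MonomialOrder.lex_lt_iff] at h ⊢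
  have key : ∀ c : ι × ℕ →₀ ℕ, mapDomain e (mapDomain (Prod.map id φ) c) =
      mapDomain (e ∘ Prod.map id φ ∘ e.symm) (mapDomain e c) := fun c => by
    rw [← mapDomain_comp, ← mapDomain_comp, ← hcomm]
  rw [key, key]
  exact Finsupp.Lex.mapDomain_lt_mapDomain hmono h

end ColLex

section ShiftDivides

variable {ι : Type*}

def ShiftDivides (u v : ι × ℕ →₀ ℕ) : Prop :=
  ∃ φ : ℕ ↪o ℕ, mapDomain (Prod.map id φ) u ≤ v

def Finsupp.columns (u : ι × ℕ →₀ ℕ) : List (ι → ℕ) :=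
  (List.range (u.support.sup Prod.snd + 1)).map fun j i => u (i, j)

theorem Finsupp.columns_getD (u : ι × ℕ →₀ ℕ) (j : ℕ) :
    (columns u).getD j ⊥ = fun i => u (i, j) := by
  by_cases hj : j < u.support.sup Prod.snd + 1
  · rw [List.getD_eq_getElem _ _ (by simpa [columns] using hj)]
    simp [columns]
  · rw [List.getD_eq_default _ _ (by simpa [columns] using hj)]
    ext i
    have : (i, j) ∉ u.support := fun hmem =>
      hj (Nat.lt_succ_of_le (Finset.le_sup (f := Prod.snd) hmem))
    simp [Finsupp.notMem_support_iff.1 this]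

theorem wellQuasiOrdered_shiftDivides [Finite ι] : WellQuasiOrdered (ShiftDivides (ι := ι)) := by
  intro u
  have hcols := (Set.isPWO_of_wellQuasiOrderedLE (Set.univ : Set (ι → ℕ))
    ).partiallyWellOrderedOn_sublistForall₂ (· ≤ ·)
  obtain ⟨i, j, hij, h⟩ := hcols.exists_lt (f := fun n => columns (u n)) (by simp)
  obtain ⟨φ, hφ⟩ := h.exists_orderEmbedding_getD_le
  refine ⟨i, j, hij, φ,
    mapDomain_le_of_forall_le (Function.injective_id.prodMap φ.injective) fun p => ?_⟩
  have hp := hφ p.2 p.1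
  rw [columns_getD, columns_getD] at hp
  exact hp

end ShiftDivides

noncomputable def permGL {n : ℕ} (π : Equiv.Perm (Fin n)) : GL (Fin n) ℂ :=
  Matrix.GeneralLinearGroup.mkOfDetNeZero (π.permMatrix ℂ) (by simp [Matrix.det_permutation])

theorem glSubst_permGL_X (m : ℕ) {n : ℕ} (π : Equiv.Perm (Fin n)) (i : Fin m) (j : Fin n) :
    glSubst m n (permGL π) (X (i, j)) = X (i, (π.symm j : ℕ)) := by
  rw [glSubst, aeval_X, dif_pos j.isLt]
  simp [permGL, Equiv.Perm.permMatrix, PEquiv.toMatrix_apply, ← Equiv.eq_symm_apply]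

theorem exists_perm_fin_eq_on {φ : ℕ → ℕ} (hφ : φ.Injective) (s : Finset ℕ) :
    ∃ (N : ℕ) (ρ : Equiv.Perm (Fin N)),
      (∀ j ∈ s, j < N) ∧ ∀ j : Fin N, (j : ℕ) ∈ s → (ρ j : ℕ) = φ j := by
  set N := s.sup (fun j => j + φ j) + 1
  have hle : ∀ j ∈ s, j + φ j < N := fun j hj =>
    Nat.lt_succ_of_le (Finset.le_sup (f := fun j => j + φ j) hj)
  obtain ⟨g, hg⟩ := Set.MapsTo.exists_equiv_extend_of_card_eq (t := Finset.range N)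
    (s := {j : Fin N | (j : ℕ) ∈ s}) (f := fun j => φ j) (by simp)
    (fun j hj => Finset.mem_coe.2 (Finset.mem_range.2 (by have := hle _ hj; simp only; omega)))
    (fun a _ b _ hab => Fin.ext (hφ hab))
  refine ⟨N, (g.trans (Equiv.subtypeEquivRight fun _ => Finset.mem_range)).trans
    Fin.equivSubtype.symm, fun j hj => by have := hle j hj; omega, fun j hj => ?_⟩
  simpa using hg j hj

theorem GLStable.rename_mem {m : ℕ} {I : Ideal (MvPolynomial (Fin m × ℕ) ℂ)} (hI : GLStable m I)
    {φ : ℕ → ℕ} (hφ : φ.Injective) {f : MvPolynomial (Fin m × ℕ) ℂ} (hf : f ∈ I) :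
    rename (Prod.map id φ) f ∈ I := by
  classical
  obtain ⟨N, ρ, hN, hρ⟩ := exists_perm_fin_eq_on hφ (f.vars.image Prod.snd)
  convert hI N (permGL ρ.symm) f hf using 1
  refine hom_congr_vars (f₁ := (rename (Prod.map id φ)).toRingHom)
    (f₂ := (glSubst m N (permGL ρ.symm)).toRingHom) ?_ ?_ rfl
  · ext; simp
  · rintro ⟨i, j⟩ hp -
    have hj : j ∈ f.vars.image Prod.snd := Finset.mem_image_of_mem Prod.snd hp
    have := glSubst_permGL_X m ρ.symm i ⟨j, hN j hj⟩
    simp only [AlgHom.toRingHom_eq_coe, RingHom.coe_coe, rename_X, Prod.map_apply, id_eq] at this ⊢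
    rw [this, Equiv.symm_symm, hρ _ hj]

theorem GLStable.mapDomain_mem_leadingDegrees {m : ℕ} {I : Ideal (MvPolynomial (Fin m × ℕ) ℂ)}
    (hI : GLStable m I) {φ : ℕ → ℕ} (hφ : StrictMono φ) {u : Fin m × ℕ →₀ ℕ}
    (hu : u ∈ (colLex (Fin m)).leadingDegrees I) :
    mapDomain (Prod.map id φ) u ∈ (colLex (Fin m)).leadingDegrees I := by
  obtain ⟨f, hfI, hf0, rfl⟩ := hu
  have hτ : (Prod.map id φ : Fin m × ℕ → Fin m × ℕ).Injective :=
    Function.injective_id.prodMap hφ.injective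
  refine ⟨rename _ f, hI.rename_mem hφ.injective hfI, fun h => hf0 ?_,
    MonomialOrder.degree_rename hτ (fun _ _ => colLex_mapDomain_lt_mapDomain hφ) f⟩
  exact rename_injective _ hτ (by rw [h, map_zero])

theorem GLStable.mem_leadingDegrees_of_shiftDivides {m : ℕ}
    {I : Ideal (MvPolynomial (Fin m × ℕ) ℂ)} (hI : GLStable m I) {u v : Fin m × ℕ →₀ ℕ}
    (huv : ShiftDivides u v) (hu : u ∈ (colLex (Fin m)).leadingDegrees I) :
    v ∈ (colLex (Fin m)).leadingDegrees I := by
  obtain ⟨φ, hle⟩ := huv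
  exact MonomialOrder.mem_leadingDegrees_of_le (hI.mapDomain_mem_leadingDegrees φ.strictMono hu) hle

theorem ascending_chain_of_GLStable_ideals_stabilizes_general (m : ℕ)
    (I : ℕ → Ideal (MvPolynomial (Fin m × ℕ) ℂ))
    (hchain : ∀ k, I k ≤ I (k + 1)) (hstab : ∀ k, GLStable m (I k)) :
    ∃ N, ∀ k, N ≤ k → I k = I N := by
  have hI : Monotone I := monotone_nat_of_le_succ hchain
  obtain ⟨N, hN⟩ := wellQuasiOrdered_shiftDivides.exists_forall_eq_of_monotone
    (S := fun k => (colLex (Fin m)).leadingDegrees (I k))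
    (fun _ _ hkl => MonomialOrder.leadingDegrees_mono (hI hkl))
    (fun k _ _ huv hu => (hstab k).mem_leadingDegrees_of_shiftDivides huv hu)
  exact ⟨N, fun k hk =>
    ((colLex _).ideal_eq_of_le_of_leadingDegrees_subset (hI hk) (hN k hk).le).symm⟩

/-- Every ascending chain of `GL(∞)`-stable ideals of `ℂ[x_{i,j} : 1 ≤ i ≤ m, j ∈ ℕ]`
stabilizes. -/
theorem ascending_chain_of_GLStable_ideals_stabilizes (m : ℕ) (hm : 1 ≤ m)
    (I : ℕ → Ideal (MvPolynomial (Fin m × ℕ) ℂ))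
    (hchain : ∀ k, I k ≤ I (k + 1)) (hstab : ∀ k, GLStable m (I k)) :
    ∃ N, ∀ k, N ≤ k → I k = I N :=
  ascending_chain_of_GLStable_ideals_stabilizes_general m I hchain hstab
end

section
/- Let f : ℂ^n → ℂ^m be a map whose components f_1, …, f_m are homogeneous polynomials of positive degree, and suppose that the image of f is not contained in any proper linear subspace of ℂ^m (equivalently, the image of f spans ℂ^m). Then there exists a positive integer r such that every element of ℂ^m can be written as a sum of r elements of the image of f (and consequently the same holds for every r' ≥ r, since f(0) = 0). -/
/-!
For `k ≥ 1` and a primitive `k`-th root of unity `ζ`, the `d`-th power sum of `ζ ^ j * α`,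
`j < k`, vanishes unless `k ∣ d`, in which case it is `k * α ^ d`. Adding such blocks for
`k = 1, …, N` shows that every `c` is the common value of all power sums `∑ x_j ^ d`,
`1 ≤ d ≤ N`, of a fixed number of `x_j`. If the components of `f` are homogeneous of degrees
in `[1, N]`, then `c • f w = ∑ f (x_j • w)`, so scalar multiples of image points are sums of
boundedly many image points. A finite spanning subset of the image therefore writes every vector
as such a sum, and `f 0 = 0` pads it to any larger length.
-/

open Finset MvPolynomial Submodule
open scoped Pointwise

theorem IsPrimitiveRoot.sum_range_pow_mul_pow {R : Type*} [CommRing R] [IsDomain R] {ζ : R}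
    {k : ℕ} (hζ : IsPrimitiveRoot ζ k) (α : R) (d : ℕ) :
    ∑ j ∈ range k, (ζ ^ j * α) ^ d = if k ∣ d then k * α ^ d else 0 := by
  have hsum : ∑ j ∈ range k, (ζ ^ j * α) ^ d = (∑ j ∈ range k, (ζ ^ d) ^ j) * α ^ d := by
    rw [sum_mul]
    refine sum_congr rfl fun j _ => ?_
    rw [mul_pow, ← pow_mul, ← pow_mul, mul_comm j d]
  have hζd : (ζ ^ d) ^ k = 1 := by rw [← pow_mul, mul_comm, pow_mul, hζ.pow_eq_one, one_pow]
  rw [hsum]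
  split_ifs with hd
  · obtain ⟨e, rfl⟩ := hd
    simp [pow_mul, hζ.pow_eq_one]
  · have hne : ζ ^ d - 1 ≠ 0 := sub_ne_zero.2 fun h => hd ((hζ.pow_eq_one_iff_dvd d).1 h)
    have hgeom := geom_sum_mul (ζ ^ d) k
    rw [hζd, sub_self] at hgeom
    rw [(mul_eq_zero.1 hgeom).resolve_right hne, zero_mul]

theorem exists_multiset_sum_map_pow_eq {K : Type*} [Field K] [IsAlgClosed K] [CharZero K]
    (N : ℕ) (c : K) : ∃ s : Multiset K, s.card = ∑ k ∈ range (N + 1), k ∧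
      ∀ d, 1 ≤ d → d ≤ N → (s.map (· ^ d)).sum = c := by
  induction N with
  | zero => exact ⟨0, by simp, fun d h1 h2 => by omega⟩
  | succ N ih =>
    obtain ⟨s, hcard, hs⟩ := ih
    have : NeZero ((N + 1 : ℕ) : K) := ⟨Nat.cast_ne_zero.2 N.succ_ne_zero⟩
    obtain ⟨ζ, hζ⟩ := HasEnoughRootsOfUnity.exists_primitiveRoot K (N + 1)
    obtain ⟨α, hα⟩ := IsAlgClosed.exists_pow_nat_eq
      ((c - (s.map (· ^ (N + 1))).sum) / (N + 1 : ℕ)) N.succ_pos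
    refine ⟨s + (Multiset.range (N + 1)).map (fun j => ζ ^ j * α), ?_, fun d hd1 hdN => ?_⟩
    · simp [hcard, sum_range_succ _ (N + 1), add_assoc]
    · rw [Multiset.map_add, Multiset.sum_add, Multiset.map_map]
      change _ + ∑ j ∈ range (N + 1), (ζ ^ j * α) ^ d = c
      rw [hζ.sum_range_pow_mul_pow]
      rcases (by omega : d ≤ N ∨ d = N + 1) with hdN | rfl
      · rw [hs d hd1 hdN, if_neg fun h => by have := Nat.le_of_dvd (by omega) h; omega, add_zero]
      · rw [if_pos dvd_rfl, hα, mul_div_cancel₀ _ (NeZero.ne _), add_sub_cancel]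

theorem MvPolynomial.IsHomogeneous.eval_smul {R σ : Type*} [CommSemiring R]
    {p : MvPolynomial σ R} {d : ℕ} (hp : p.IsHomogeneous d) (c : R) (v : σ → R) :
    eval (c • v) p = c ^ d * eval v p := by
  conv_lhs => rw [p.as_sum]
  conv_rhs => rw [p.as_sum]
  rw [map_sum, map_sum, mul_sum]
  refine sum_congr rfl fun u hu => ?_
  have hdeg := hp (mem_support_iff.1 hu)
  simp only [eval_monomial, Pi.smul_apply, smul_eq_mul, mul_pow, Finsupp.prod_mul]
  have hcu : (u.prod fun _ e => c ^ e) = c ^ d := by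
    simp only [← hdeg, Finsupp.weight_apply, Pi.one_apply, smul_eq_mul, mul_one]
    exact prod_pow_eq_pow_sum _ _ _
  rw [hcu]
  ring

theorem smul_mem_nsmul_range_eval {K σ ι : Type*} [Field K] [IsAlgClosed K] [CharZero K]
    {F : ι → MvPolynomial σ K} {N : ℕ} (hF : ∀ i, ∃ d, 1 ≤ d ∧ d ≤ N ∧ (F i).IsHomogeneous d)
    (c : K) (w : σ → K) :
    c • (fun i => eval w (F i)) ∈
      (∑ k ∈ range (N + 1), k) • Set.range fun v i => eval v (F i) := by
  obtain ⟨s, hcard, hs⟩ := exists_multiset_sum_map_pow_eq N c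
  have hsum : c • (fun i => eval w (F i)) = (s.map fun x i => eval (x • w) (F i)).sum := by
    funext i
    obtain ⟨d, hd1, hdN, hd⟩ := hF i
    simp only [Pi.multiset_sum_apply, Multiset.map_map, Function.comp_def, hd.eval_smul,
      Multiset.sum_map_mul_right, hs d hd1 hdN, Pi.smul_apply, smul_eq_mul]
  rw [hsum, ← hcard, ← Multiset.sum_replicate, ← Multiset.map_const']
  exact Set.multiset_sum_mem_multiset_sum _ _ _ fun x _ => Set.mem_range_self _

theorem exists_nsmul_eq_univ_of_span_eq_top {K V : Type*} [DivisionRing K] [AddCommGroup V]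
    [Module K V] [FiniteDimensional K V] {A : Set V} {R : ℕ}
    (hA : ∀ (c : K), ∀ a ∈ A, c • a ∈ R • A) (hspan : span K A = ⊤) :
    ∃ r : ℕ, r • A = Set.univ := by
  obtain ⟨B, hBA, hB, hli⟩ := exists_linearIndependent K A
  set T := hli.setFinite.toFinset
  refine ⟨T.card * R, Set.eq_univ_of_forall fun y => ?_⟩
  have hy : y ∈ span K (T : Set V) := by simp [T, hB, hspan]
  obtain ⟨c, -, rfl⟩ := mem_span_finset.1 hy
  have := Set.finsetSum_mem_finsetSum T (fun _ => R • A) (fun t => c t • t)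
    fun t ht => hA _ _ (hBA (by simpa [T] using ht))
  rwa [sum_const, ← mul_nsmul'] at this

/-- Let `f : ℂ^n → ℂ^m` be a map whose components are homogeneous polynomials of positive
degree and whose image spans `ℂ^m` (i.e. is not contained in a proper linear subspace).
Then there is `r > 0` such that every element of `ℂ^m` is a sum of `r` elements of the image
of `f`; consequently the same holds for every `r' ≥ r`. -/
theorem every_vector_sum_of_r_image_elements (n m : ℕ) (F : Fin m → MvPolynomial (Fin n) ℂ)
    (hhom : ∀ i, ∃ d : ℕ, 1 ≤ d ∧ F i ∈ MvPolynomial.homogeneousSubmodule (Fin n) ℂ d)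
    (hspan : Submodule.span ℂ
        (Set.range fun v : Fin n → ℂ => fun i => MvPolynomial.eval v (F i)) = ⊤) :
    ∃ r : ℕ, 0 < r ∧ ∀ r' : ℕ, r ≤ r' → ∀ y : Fin m → ℂ,
      ∃ vs : Fin r' → (Fin n → ℂ),
        y = ∑ s : Fin r', fun i => MvPolynomial.eval (vs s) (F i) := by
  choose d hd1 hd using hhom
  have hdeg (i : Fin m) : ∃ e, 1 ≤ e ∧ e ≤ univ.sup d ∧ (F i).IsHomogeneous e :=
    ⟨d i, hd1 i, le_sup (mem_univ i), hd i⟩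
  obtain ⟨r, hr⟩ := exists_nsmul_eq_univ_of_span_eq_top
    (by rintro c _ ⟨w, rfl⟩; exact smul_mem_nsmul_range_eval hdeg c w) hspan
  have hzero : (0 : Fin m → ℂ) ∈ Set.range fun v i => eval v (F i) := by
    refine ⟨0, funext fun i => ?_⟩
    simpa [zero_pow (Nat.one_le_iff_ne_zero.1 (hd1 i))] using (hd i).eval_smul 0 0
  refine ⟨r + 1, r.succ_pos, fun r' hr' y => ?_⟩
  have hy : y ∈ r' • Set.range fun v i => eval v (F i) :=
    Set.nsmul_subset_nsmul_right hzero (by omega) (hr ▸ Set.mem_univ y)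
  obtain ⟨g, hg⟩ := Set.mem_nsmul.1 hy
  choose vs hvs using fun s => (g s).2
  refine ⟨vs, ?_⟩
  rw [← hg, List.sum_ofFn]
  simp [hvs]
end

section
/- Let K be a field and let (f_i)_{i≥0} be a sequence of elements of K. Assume there exists an integer m > 0 and an integer K₀ such that for all integers k_1, …, k_m ≥ K₀, the m × m matrix whose (i,j) entry is f_{k_i − j} (for 1 ≤ i, j ≤ m) has determinant zero. Then the power series f = ∑_{i≥0} f_i t^i ∈ K[[t]] can be expressed in the form a/b with a, b ∈ K[t], b ≠ 0, and deg b ≤ m − 1; that is, there exists a nonzero polynomial b ∈ K[t] of degree at most m − 1 such that b·f is a polynomial. -/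
/-!
The vectors `(f_{n-1}, …, f_{n-m})` with `n ≥ max K₀ m` cannot span `K^m`: otherwise `m` linearly
independent ones among them would form a matrix of the hypothesis with nonzero determinant. A
nonzero vector `c` orthogonal to all of them is a linear recurrence `∑ c_j f_{n-j} = 0` for large
`n`, which says that `b = ∑ c_j t^j` kills all large coefficients of `b f`.
-/

open Module Polynomial PowerSeries Submodule

theorem span_range_ne_top_of_forall_det_eq_zero {K ι : Type*} [Field K] {m : ℕ}
    (v : ι → Fin m → K) (h : ∀ k : Fin m → ι, (Matrix.of fun i => v (k i)).det = 0) :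
    span K (Set.range v) ≠ ⊤ := by
  intro htop
  obtain ⟨κ, a, -, hspan, hli⟩ := exists_linearIndependent' K v
  have : Finite κ := hli.finite
  have := Fintype.ofFinite κ
  have hcard : Fintype.card κ = m := by
    rw [linearIndependent_iff_card_eq_finrank_span.mp hli, Set.finrank, hspan, htop, finrank_top,
      finrank_fin_fun]
  let e : Fin m ≃ κ := (Fintype.equivFinOfCardEq hcard).symm
  have hrows : LinearIndependent K (Matrix.of fun i => v (a (e i))).row :=
    hli.comp e e.injective
  exact (Matrix.isUnit_iff_isUnit_det _).mp (Matrix.linearIndependent_rows_iff_isUnit.mp hrows)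
    |>.ne_zero (h _)

theorem exists_ne_zero_forall_dotProduct_eq_zero_of_span_ne_top {K ι n : Type*} [Field K]
    [Fintype n] [DecidableEq n] {v : ι → n → K} (hv : span K (Set.range v) ≠ ⊤) :
    ∃ c : n → K, c ≠ 0 ∧ ∀ i, c ⬝ᵥ v i = 0 := by
  obtain ⟨φ, hφ, hmap⟩ := exists_dual_map_eq_bot_of_lt_top hv.lt_top inferInstance
  refine ⟨(dotProductEquiv K n).symm φ, by simpa using hφ, fun i => ?_⟩
  have : φ (v i) ∈ (span K (Set.range v)).map φ := mem_map_of_mem (subset_span ⟨i, rfl⟩)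
  rw [hmap, mem_bot, ← (dotProductEquiv K n).apply_symm_apply φ] at this
  exact this

theorem PowerSeries.coeff_ofFn_mul_mk {R : Type*} [CommSemiring R] [DecidableEq R] {m n : ℕ}
    (c : Fin m → R) (f : ℕ → R) (hmn : m ≤ n + 1) :
    coeff n ((ofFn m c : PowerSeries R) * mk f) = ∑ j : Fin m, c j * f (n - j) := by
  rw [ofFn_eq_sum_monomial, ← coeToPowerSeries.ringHom_apply, map_sum, Finset.sum_mul, map_sum]
  refine Finset.sum_congr rfl fun j _ => ?_
  rw [coeToPowerSeries.ringHom_apply, coe_monomial, monomial_eq_C_mul_X_pow, mul_assoc,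
    coeff_C_mul, coeff_X_pow_mul', if_pos (by omega), coeff_mk]

theorem PowerSeries.coe_trunc_of_coeff_eq_zero {R : Type*} [CommSemiring R] {g : PowerSeries R}
    {N : ℕ} (h : ∀ n, N ≤ n → coeff n g = 0) : (trunc N g : PowerSeries R) = g := by
  ext n
  rw [Polynomial.coeff_coe, coeff_trunc]
  split_ifs with hn
  · rfl
  · exact (h n (not_lt.mp hn)).symm

theorem power_series_rational_of_eventually_vanishing_determinants_general
    (K : Type*) [Field K] (f : ℕ → K) (m : ℕ) (K₀ : ℕ)
    (hdet : ∀ k : Fin m → ℕ, (∀ i, K₀ ≤ k i) → (∀ i, m ≤ k i) →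
      Matrix.det (Matrix.of fun i j : Fin m => f (k i - ((j : ℕ) + 1))) = 0) :
    ∃ a b : Polynomial K, b ≠ 0 ∧ b.natDegree ≤ m - 1 ∧
      (b : PowerSeries K) * PowerSeries.mk f = (a : PowerSeries K) := by
  classical
  set N := max K₀ m
  let v : {n // N ≤ n} → Fin m → K := fun n j => f (n - (j + 1))
  obtain ⟨c, hc, hrec⟩ := exists_ne_zero_forall_dotProduct_eq_zero_of_span_ne_top
    (span_range_ne_top_of_forall_det_eq_zero v fun k =>
      hdet (fun i => k i) (fun i => (le_max_left _ _).trans (k i).2)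
        (fun i => (le_max_right _ _).trans (k i).2))
  have hb : ofFn m c ≠ 0 := by simpa using (injective_ofFn m).ne hc
  refine ⟨trunc N (ofFn m c * mk f), ofFn m c, hb, ?_,
    (coe_trunc_of_coeff_eq_zero fun n hn => ?_).symm⟩
  · have := (natDegree_lt_iff_degree_lt hb).mpr (ofFn_degree_lt c)
    omega
  · rw [coeff_ofFn_mul_mk c f ((le_max_right K₀ m).trans (Nat.le_succ_of_le hn))]
    simpa [v, dotProduct] using hrec ⟨n + 1, by omega⟩

/-- Let `(f_i)` be a sequence in a field `K`, and suppose there are `m > 0` and `K₀` such that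
for all `k_1, …, k_m ≥ K₀` (with each `k_i ≥ m`, so that the indices below are non-negative)
the `m × m` matrix `(f_{k_i − j})_{1 ≤ i,j ≤ m}` has determinant zero.  Then
`f = ∑ f_i t^i` can be written as `a/b` with `a, b ∈ K[t]`, `b ≠ 0` and `deg b ≤ m − 1`. -/
theorem power_series_rational_of_eventually_vanishing_determinants
    (K : Type*) [Field K] (f : ℕ → K) (m : ℕ) (hm : 0 < m) (K₀ : ℕ)
    (hdet : ∀ k : Fin m → ℕ, (∀ i, K₀ ≤ k i) → (∀ i, m ≤ k i) →
      Matrix.det (Matrix.of fun i j : Fin m => f (k i - ((j : ℕ) + 1))) = 0) :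
    ∃ a b : Polynomial K, b ≠ 0 ∧ b.natDegree ≤ m - 1 ∧
      (b : PowerSeries K) * PowerSeries.mk f = (a : PowerSeries K) :=
  power_series_rational_of_eventually_vanishing_determinants_general K f m K₀ hdet
end

section
/- Let A be a unique factorization domain and let (f_i)_{i≥0} be a sequence of elements of A. Assume there exist an integer m ≥ 1 and elements α_1, …, α_m of A such that the recurrence f_k = ∑_{i=1}^{m} α_i f_{k−i} holds for all sufficiently large k, and assume m is minimal among all integers for which such elements of A exist. Then for every N there exist integers k_1, …, k_m > N such that the determinant of the m × m matrix (f_{k_i − j})_{1 ≤ i,j ≤ m} is nonzero. -/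
open Polynomial Matrix Finset

private lemma sum_mulVec'' {R n ι : Type*} [Fintype n] [NonUnitalNonAssocSemiring R]
    (s : Finset ι) (A : ι → Matrix n n R) (w : n → R) :
    (∑ i ∈ s, A i) *ᵥ w = ∑ i ∈ s, (A i *ᵥ w) := by
  ext x
  simp only [Matrix.mulVec, dotProduct, Finset.sum_apply, Finset.sum_mul,
    Matrix.sum_apply]
  rw [Finset.sum_comm]

/-- Let `(f_i)` be a sequence in a UFD `A` satisfying, for all sufficiently large `k`, a linear
recurrence `f_k = ∑_{i=1}^m α_i f_{k−i}` with coefficients in `A`, with `m` minimal among all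
integers admitting such a recurrence with coefficients in `A`.  Then for every `N` there are
`k_1, …, k_m > N` such that `det (f_{k_i − j})_{1 ≤ i,j ≤ m} ≠ 0`. -/
theorem exists_nonvanishing_determinant_of_minimal_recurrence
    (A : Type*) [CommRing A] [IsDomain A] [UniqueFactorizationMonoid A]
    (f : ℕ → A) (m : ℕ) (hm : 1 ≤ m) (α : Fin m → A)
    (hrec : ∃ K₀ : ℕ, ∀ k : ℕ, K₀ ≤ k → m ≤ k →
      f k = ∑ i : Fin m, α i * f (k - ((i : ℕ) + 1)))
    (hmin : ∀ (m' : ℕ) (α' : Fin m' → A),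
      (∃ K₀ : ℕ, ∀ k : ℕ, K₀ ≤ k → m' ≤ k →
        f k = ∑ i : Fin m', α' i * f (k - ((i : ℕ) + 1))) → m ≤ m') :
    ∀ N : ℕ, ∃ k : Fin m → ℕ, (∀ i, N < k i) ∧ (∀ i, m ≤ k i) ∧
      Matrix.det (Matrix.of fun i j : Fin m => f (k i - ((j : ℕ) + 1))) ≠ 0 := by
  intro N
  by_contra hcon
  push_neg at hcon
  obtain ⟨K₀, hK₀⟩ := hrec
  set K := FractionRing A
  set φ : A →+* K := algebraMap A K with hφ
  have hinj : Function.Injective φ := IsFractionRing.injective A K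
  set F : ℕ → K := fun n => φ (f n) with hF
  set M : ℕ := K₀ + m + N + 1 with hM
  have hMK₀ : K₀ ≤ M := by omega
  have hMm : m ≤ M := by omega
  have hMN : N < M := by omega
  set v : ℕ → Fin m → K := fun k j => F (k - ((j : ℕ) + 1)) with hv
  set Ca : Matrix (Fin m) (Fin m) A :=
    Matrix.of (fun i j => if (i : ℕ) = 0 then α j
      else if (j : ℕ) + 1 = (i : ℕ) then 1 else 0) with hCa
  set Cm : Matrix (Fin m) (Fin m) K := Ca.map φ with hCm
  -- the companion matrix shifts the window vectors
  have hstep : ∀ k, M ≤ k → Cm *ᵥ v k = v (k + 1) := by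
    intro k hk
    funext i
    show (∑ j, Cm i j * v k j) = v (k + 1) i
    rcases Nat.eq_zero_or_pos (i : ℕ) with h0 | hpos
    · have h1 : ∀ j : Fin m, Cm i j = φ (α j) := by
        intro j; simp [hCm, hCa, h0]
      have h2 : v (k + 1) i = F k := by
        simp only [hv, h0, Nat.add_sub_cancel, zero_add]
      rw [h2]
      simp only [h1, hv, hF]
      rw [hK₀ k (by omega) (by omega), map_sum]
      simp only [_root_.map_mul]
    · have hielt : (i : ℕ) - 1 < m := by omega
      set j₀ : Fin m := ⟨(i : ℕ) - 1, hielt⟩ with hj₀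
      have h1 : ∀ j : Fin m, Cm i j = if j = j₀ then 1 else 0 := by
        intro j
        have hval : (j₀ : ℕ) = (i : ℕ) - 1 := rfl
        have hiff : ((j : ℕ) + 1 = (i : ℕ)) = (j = j₀) := by
          apply propext
          rw [Fin.ext_iff, hval]
          omega
        simp only [hCm, Matrix.map_apply, hCa, Matrix.of_apply]
        rw [if_neg (by omega : ¬ ((i : ℕ) = 0))]
        simp only [apply_ite φ, _root_.map_one, _root_.map_zero, hiff]
      simp only [h1, ite_mul, one_mul, zero_mul]
      rw [Finset.sum_ite_eq' Finset.univ j₀ (v k)]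
      simp only [Finset.mem_univ, if_true]
      show F (k - (((i : ℕ) - 1) + 1)) = F (k + 1 - ((i : ℕ) + 1))
      congr 1
      omega
  have hpow : ∀ (t k : ℕ), M ≤ k → (Cm ^ t) *ᵥ v k = v (k + t) := by
    intro t
    induction t with
    | zero => intro k hk; simp
    | succ t ih =>
      intro k hk
      rw [pow_succ', ← Matrix.mulVec_mulVec, ih k hk, hstep (k + t) (by omega),
        Nat.add_assoc]
  -- the annihilator ideal
  set J : Ideal (Polynomial K) :=
    { carrier := {q | (Polynomial.aeval Cm q) *ᵥ v M = 0}
      add_mem' := by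
        intro a b ha hb
        simp only [Set.mem_setOf_eq, map_add, Matrix.add_mulVec] at *
        rw [ha, hb, add_zero]
      zero_mem' := by simp
      smul_mem' := by
        intro q p hp
        simp only [Set.mem_setOf_eq, smul_eq_mul, _root_.map_mul,
          ← Matrix.mulVec_mulVec] at *
        rw [hp, Matrix.mulVec_zero] } with hJ
  have hmemJ : ∀ q : Polynomial K, q ∈ J ↔ (Polynomial.aeval Cm q) *ᵥ v M = 0 :=
    fun q => Iff.rfl
  -- charpoly is in J
  have hchJ : Cm.charpoly ∈ J := by
    rw [hmemJ, Matrix.aeval_self_charpoly, Matrix.zero_mulVec]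
  -- a nonzero polynomial of degree < m in J
  have hdet0 : Matrix.det (Matrix.of fun t j : Fin m => v (M + (t : ℕ)) j) = 0 := by
    have h1 : Matrix.det (Matrix.of fun t j : Fin m =>
        f (M + (t : ℕ) - ((j : ℕ) + 1))) = 0 :=
      hcon (fun t => M + (t : ℕ)) (fun i => by show N < M + (i : ℕ); omega)
        (fun i => by show m ≤ M + (i : ℕ); omega)
    have h2 : (Matrix.of fun t j : Fin m => v (M + (t : ℕ)) j) =
        φ.mapMatrix (Matrix.of fun t j : Fin m => f (M + (t : ℕ) - ((j : ℕ) + 1))) := by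
      ext t j; rfl
    rw [h2, ← RingHom.map_det, h1, map_zero]
  obtain ⟨d, hd0, hdvm⟩ := Matrix.exists_vecMul_eq_zero_iff.mpr hdet0
  have hdsum : ∑ t : Fin m, d t • v (M + (t : ℕ)) = 0 := by
    funext j
    have := congrFun hdvm j
    simpa [Matrix.vecMul, dotProduct, Finset.sum_apply] using this
  set p : Polynomial K := ∑ t : Fin m, Polynomial.C (d t) * Polynomial.X ^ (t : ℕ) with hp
  have hpJ : p ∈ J := by
    rw [hmemJ]
    have h1 : Polynomial.aeval Cm p = ∑ t : Fin m, d t • Cm ^ (t : ℕ) := by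
      rw [hp, map_sum]
      congr 1
      funext t
      rw [_root_.map_mul, Polynomial.aeval_C, Polynomial.aeval_X_pow, Algebra.smul_def]
    rw [h1, sum_mulVec'']
    have h2 : ∀ t : Fin m, (d t • Cm ^ (t : ℕ)) *ᵥ v M = d t • v (M + (t : ℕ)) := by
      intro t
      rw [Matrix.smul_mulVec, hpow _ M le_rfl]
    simp only [h2]
    exact hdsum
  have hpne : p ≠ 0 := by
    intro h
    apply hd0
    funext t
    have h1 : p.coeff (t : ℕ) = d t := by
      rw [hp, Polynomial.finset_sum_coeff]
      have h2 : ∀ t' : Fin m, (Polynomial.C (d t') * Polynomial.X ^ (t' : ℕ)).coeff (t : ℕ)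
          = if t' = t then d t' else 0 := by
        intro t'
        rw [Polynomial.coeff_C_mul, Polynomial.coeff_X_pow]
        by_cases h : t' = t
        · simp [h]
        · have : (t : ℕ) ≠ (t' : ℕ) := fun hc => h (Fin.ext hc.symm)
          simp [h, this]
      simp only [h2]
      simp
    rw [h] at h1
    simpa using h1.symm
  have hpdeg : p.natDegree ≤ m - 1 := by
    apply Polynomial.natDegree_sum_le_of_forall_le
    intro t _
    refine le_trans (Polynomial.natDegree_mul_le) ?_
    simp only [Polynomial.natDegree_C, Polynomial.natDegree_X_pow, zero_add]
    omega
  -- the monic generator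
  have hprin : J.IsPrincipal := IsPrincipalIdealRing.principal J
  set g₀ : Polynomial K := Submodule.IsPrincipal.generator J with hg₀
  have hdvd : ∀ q ∈ J, g₀ ∣ q := by
    intro q hq
    rw [← Ideal.span_singleton_generator J] at hq
    exact Ideal.mem_span_singleton.mp hq
  have hg₀J : g₀ ∈ J := Submodule.IsPrincipal.generator_mem J
  have hg₀ne : g₀ ≠ 0 := by
    intro h
    have := hdvd _ hchJ
    rw [h, zero_dvd_iff] at this
    exact (Matrix.charpoly_monic Cm).ne_zero this
  set g₁ : Polynomial K := g₀ * Polynomial.C (g₀.leadingCoeff)⁻¹ with hg₁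
  have hg₁monic : g₁.Monic := Polynomial.monic_mul_leadingCoeff_inv hg₀ne
  have hg₁J : g₁ ∈ J := J.mul_mem_right _ hg₀J
  have hg₁dvdg₀ : g₁ ∣ g₀ := by
    refine ⟨Polynomial.C g₀.leadingCoeff, ?_⟩
    rw [hg₁, mul_assoc, ← Polynomial.C_mul,
      inv_mul_cancel₀ (Polynomial.leadingCoeff_ne_zero.mpr hg₀ne), Polynomial.C_1, mul_one]
  have hg₁deg : g₁.natDegree ≤ m - 1 := by
    have h1 : g₀.natDegree ≤ p.natDegree :=
      Polynomial.natDegree_le_of_dvd (hdvd _ hpJ) hpne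
    have h2 : g₁.natDegree = g₀.natDegree := by
      rw [hg₁, Polynomial.natDegree_mul hg₀ne (by
        simp [Polynomial.leadingCoeff_ne_zero.mpr hg₀ne]), Polynomial.natDegree_C, add_zero]
    omega
  -- Gauss's lemma: descend to A
  have hdvdch : g₁ ∣ Ca.charpoly.map φ := by
    have h1 : g₀ ∣ Cm.charpoly := hdvd _ hchJ
    have h2 : Cm.charpoly = Ca.charpoly.map φ := Matrix.charpoly_map Ca φ
    rw [← h2]
    exact hg₁dvdg₀.trans h1
  obtain ⟨G, hG⟩ := IsIntegrallyClosed.eq_map_mul_C_of_dvd (K := K)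
    (Matrix.charpoly_monic Ca) hdvdch
  rw [Polynomial.Monic.leadingCoeff hg₁monic, Polynomial.C_1, mul_one] at hG
  set r : ℕ := G.natDegree with hr
  have hrg : g₁.natDegree = r := by
    rw [← hG, hr, Polynomial.natDegree_map_eq_of_injective hinj]
  have hrm : r < m := by omega
  -- the relation
  have hannih : ∀ t : ℕ, (Polynomial.aeval Cm g₁) *ᵥ v (M + t) = 0 := by
    intro t
    rw [← hpow t M le_rfl, Matrix.mulVec_mulVec]
    have hcomm : Polynomial.aeval Cm g₁ * Cm ^ t = Cm ^ t * Polynomial.aeval Cm g₁ := by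
      rw [← Polynomial.aeval_X_pow (R := K) (x := Cm) (n := t), ← _root_.map_mul, ← _root_.map_mul, mul_comm]
    rw [hcomm, ← Matrix.mulVec_mulVec, (hmemJ g₁).mp hg₁J, Matrix.mulVec_zero]
  have hFrel : ∀ t : ℕ, ∑ j ∈ Finset.range (r + 1), g₁.coeff j * F (M + t + j - 1) = 0 := by
    intro t
    have h0 := hannih t
    rw [Polynomial.aeval_eq_sum_range' (n := r + 1) (by omega), sum_mulVec''] at h0
    have h1 : ∀ j ∈ Finset.range (r + 1),
        (g₁.coeff j • Cm ^ j) *ᵥ v (M + t) = g₁.coeff j • v (M + t + j) := by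
      intro j _
      rw [Matrix.smul_mulVec, hpow _ _ (by omega)]
    rw [Finset.sum_congr rfl h1] at h0
    have h2 := congrFun h0 (⟨0, by omega⟩ : Fin m)
    simpa [Finset.sum_apply, hv] using h2
  -- the shorter recurrence over A
  set β : Fin r → A := fun i => - G.coeff (r - 1 - (i : ℕ)) with hβ
  have hGcoeff : ∀ j, g₁.coeff j = φ (G.coeff j) := by
    intro j
    rw [← hG, Polynomial.coeff_map]
  have main : ∀ k, M + r ≤ k → r ≤ k →
      f k = ∑ i : Fin r, β i * f (k - ((i : ℕ) + 1)) := by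
    intro k hk1 hk2
    apply hinj
    have hrel := hFrel (k - r + 1 - M)
    have hidx : ∀ j, M + (k - r + 1 - M) + j - 1 = k - r + j := by
      intro j; omega
    simp only [hidx] at hrel
    rw [Finset.sum_range_succ] at hrel
    have hcr : g₁.coeff r = 1 := by
      rw [← hrg]; exact hg₁monic.coeff_natDegree
    rw [hcr, one_mul, (by omega : k - r + r = k)] at hrel
    have hlhs : φ (f k) = ∑ j ∈ Finset.range r, -(g₁.coeff j * F (k - r + j)) := by
      rw [Finset.sum_neg_distrib]
      exact eq_neg_of_add_eq_zero_right hrel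
    rw [hlhs, map_sum]
    have hrhs : ∀ i : Fin r, φ (β i * f (k - ((i : ℕ) + 1)))
        = -(g₁.coeff (r - 1 - (i : ℕ)) * F (k - r + (r - 1 - (i : ℕ)))) := by
      intro i
      have hil := i.isLt
      have hidx2 : k - r + (r - 1 - (i : ℕ)) = k - ((i : ℕ) + 1) := by omega
      rw [hidx2]
      show φ ((- G.coeff (r - 1 - (i : ℕ))) * f (k - ((i : ℕ) + 1))) = _
      rw [_root_.map_mul, map_neg, ← hGcoeff, neg_mul]
    rw [Finset.sum_congr rfl (fun i _ => hrhs i)]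
    have : ∑ i : Fin r, -(g₁.coeff (r - 1 - (i : ℕ)) * F (k - r + (r - 1 - (i : ℕ))))
        = ∑ j ∈ Finset.range r, -(g₁.coeff (r - 1 - j) * F (k - r + (r - 1 - j))) :=
      Fin.sum_univ_eq_sum_range (fun j => -(g₁.coeff (r - 1 - j) * F (k - r + (r - 1 - j)))) r
    rw [this, Finset.sum_range_reflect (fun j => -(g₁.coeff j * F (k - r + j))) r]
  have := hmin r β ⟨M + r, fun k hk1 hk2 => main k hk1 hk2⟩
  omega
end

section
/- Let W be a finite-dimensional complex vector space and let V be a finite-dimensional linear subspace of Sym(W) spanned by homogeneous elements of positive degree. Then there exists r₀ such that for all r ≥ r₀ the ℂ-algebra homomorphism i_r : Sym(V) → Sym(W)^{⊗r} is injective. -/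
/-!
Jacobian criterion: if some `κ × κ` minor of the Jacobian matrix of `F₁, …, F_κ` is a nonzero
polynomial, the `F_v` are algebraically independent. Indeed, for a relation `P(F) = 0` of minimal
degree the chain rule says that the vector `((∂_v P)(F))_v` is killed by that minor, so every
`(∂_v P)(F)` vanishes, hence by minimality every `∂_v P` does, and `P` is constant, hence zero.

For `F_v = ∑_s f_v(y^{(s)})` the Jacobian has the rows `(∂_j f_v(q))_v` with `q` evaluated in the
`s`-th factor. Since the `f_v` are linearly independent and have no constant term, no nonzero
combination of them has all partial derivatives zero, so these rows, over all points `q` and all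
variables `j`, span `ℂ^κ`. Choosing `κ` independent rows and putting their points into `κ` distinct
factors gives a minor that does not vanish at that point; so `r₀ = κ` works.
-/

open MvPolynomial

namespace MvPolynomial

variable {σ R : Type*}

theorem totalDegree_pderiv_lt [CommSemiring R] {p : MvPolynomial σ R} {i : σ}
    (h : pderiv i p ≠ 0) : (pderiv i p).totalDegree < p.totalDegree := by
  obtain ⟨d, hd, hdeg⟩ := Finset.exists_mem_eq_sup _ (support_nonempty.mpr h)
    fun s => s.sum fun _ e => e
  have hcoeff : coeff (d + Finsupp.single i 1) p ≠ 0 := by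
    intro h0
    rw [mem_support_iff, coeff_pderiv, h0, zero_mul] at hd
    exact hd rfl
  calc (pderiv i p).totalDegree = d.sum fun _ e => e := hdeg
    _ < (d + Finsupp.single i 1).sum fun _ e => e := by
      rw [Finsupp.sum_add_index' (fun _ => rfl) (fun _ _ _ => rfl), Finsupp.sum_single_index rfl]
      omega
    _ ≤ p.totalDegree := le_totalDegree (mem_support_iff.mpr hcoeff)

theorem eq_C_of_forall_pderiv_eq_zero [CommSemiring R] [NoZeroDivisors R] [CharZero R]
    {p : MvPolynomial σ R} (h : ∀ i, pderiv i p = 0) : p = C (coeff 0 p) := by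
  classical
  ext m
  rw [coeff_C]
  split_ifs with hm
  · rw [hm]
  obtain ⟨i, hi⟩ : ∃ i, m i ≠ 0 := by
    by_contra! hall
    exact hm (Finsupp.ext hall).symm
  have hm' : m - Finsupp.single i 1 + Finsupp.single i 1 = m :=
    tsub_add_cancel_of_le (Finsupp.single_le_iff.mpr (Nat.one_le_iff_ne_zero.mpr hi))
  have := coeff_pderiv (i := i) p (m - Finsupp.single i 1)
  rw [h i, coeff_zero, hm', eq_comm, mul_eq_zero] at this
  exact this.resolve_right (Nat.cast_add_one_ne_zero _)

theorem _root_.Derivation.map_aeval_mvPolynomial {ι A M : Type*} [Fintype ι] [CommSemiring R]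
    [CommSemiring A] [Algebra R A] [AddCommMonoid M] [Module A M] [Module R M]
    [IsScalarTower R A M] (D : Derivation R A M) (F : ι → A) (P : MvPolynomial ι R) :
    D (aeval F P) = ∑ v, aeval F (pderiv v P) • D (F v) := by
  classical
  induction P using MvPolynomial.induction_on with
  | C a => simp
  | add p q hp hq => simp only [map_add, hp, hq, add_smul, Finset.sum_add_distrib]
  | mul_X p v hp =>
    simp [Derivation.leibniz, hp, pderiv_X, Pi.single_apply, add_smul, Finset.sum_add_distrib,
      Finset.smul_sum, smul_smul, mul_comm, add_comm, apply_ite (aeval F), ite_smul]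

theorem coeff_zero_eq_zero_of_mem_span_homogeneous [CommSemiring R]
    {S : Set (MvPolynomial σ R)}
    (hS : ∀ f ∈ S, ∃ d : ℕ, 1 ≤ d ∧ f ∈ homogeneousSubmodule σ R d) {p : MvPolynomial σ R}
    (hp : p ∈ Submodule.span R S) : coeff 0 p = 0 := by
  refine (Submodule.span_le (p := LinearMap.ker (lcoeff R 0))).mpr (fun f hf => ?_) hp
  obtain ⟨d, hd, hfd⟩ := hS f hf
  exact ((mem_homogeneousSubmodule d f).mp hfd).coeff_eq_zero (by simp; omega)

/-- The element `∑_s 1 ⊗ ⋯ ⊗ p ⊗ ⋯ ⊗ 1` of `R[σ]^{⊗ρ} = R[ρ × σ]`. -/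
noncomputable def sumCopies (ρ : Type*) [Fintype ρ] [CommSemiring R] (p : MvPolynomial σ R) :
    MvPolynomial (ρ × σ) R :=
  ∑ s, rename (Prod.mk s) p

theorem pderiv_sumCopies {ρ : Type*} [Fintype ρ] [CommSemiring R] (p : MvPolynomial σ R)
    (s : ρ) (j : σ) : pderiv (s, j) (sumCopies ρ p) = rename (Prod.mk s) (pderiv j p) := by
  rw [sumCopies, map_sum, Finset.sum_eq_single s]
  · exact pderiv_rename (Prod.mk_right_injective s) j p
  · intro t _ hts
    refine pderiv_eq_zero_of_notMem_vars fun hmem => hts ?_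
    obtain ⟨i, -, hi⟩ := mem_vars_rename _ p hmem
    exact congrArg Prod.fst hi
  · simp

end MvPolynomial

theorem algebraicIndependent_of_det_ne_zero {ι K A : Type*} [Fintype ι] [DecidableEq ι] [Field K]
    [CharZero K] [CommRing A] [IsDomain A] [Algebra K A] (F : ι → A) (D : ι → Derivation K A A)
    (hdet : (Matrix.of fun i v => D i (F v)).det ≠ 0) : AlgebraicIndependent K F := by
  rw [AlgebraicIndependent, injective_iff_map_eq_zero]
  intro P hP
  induction hn : P.totalDegree using Nat.strong_induction_on generalizing P with
  | _ n ih =>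
    have hchain : (fun v => aeval F (pderiv v P)) = 0 := by
      refine Matrix.eq_zero_of_mulVec_eq_zero hdet (funext fun i => ?_)
      simp only [Matrix.mulVec, dotProduct, Matrix.of_apply, Pi.zero_apply, mul_comm (D i _),
        ← smul_eq_mul, ← (D i).map_aeval_mvPolynomial, hP, map_zero]
    have hpderiv : ∀ v, pderiv v P = 0 := fun v => by
      by_contra hv
      exact hv (ih _ (hn ▸ totalDegree_pderiv_lt hv) _ (congrFun hchain v) rfl)
    rw [eq_C_of_forall_pderiv_eq_zero hpderiv] at hP ⊢
    rw [aeval_C, map_eq_zero_iff _ (algebraMap K A).injective] at hP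
    rw [hP, C_0]

theorem exists_det_ne_zero_of_span_eq_top {α ι K : Type*} [Fintype ι] [DecidableEq ι] [Field K]
    (row : α → ι → K) (h : Submodule.span K (Set.range row) = ⊤) :
    ∃ e : ι → α, (Matrix.of fun i => row (e i)).det ≠ 0 := by
  obtain ⟨κ, a, -, hspan, hli⟩ := exists_linearIndependent' K row
  let idx : κ ≃ ι := (Module.Basis.mk hli (by rw [hspan, h])).indexEquiv (Pi.basisFun K ι)
  refine ⟨a ∘ idx.symm, ?_⟩
  have hunit := Matrix.linearIndependent_rows_iff_isUnit.mp (hli.comp _ idx.symm.injective)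
  exact ((Matrix.isUnit_iff_isUnit_det _).mp hunit).ne_zero

section

variable {σ ι K : Type*} [Fintype ι] [Field K] [CharZero K] {f : ι → MvPolynomial σ K}

theorem span_eval_pderiv_eq_top (hli : LinearIndependent K f) (h0 : ∀ v, coeff 0 (f v) = 0) :
    Submodule.span K
      (Set.range fun x : (σ → K) × σ => fun v => eval x.1 (pderiv x.2 (f v))) = ⊤ := by
  classical
  rw [← Submodule.dualAnnihilator_eq_bot_iff, eq_bot_iff]
  intro φ hφ
  rw [Submodule.mem_dualAnnihilator] at hφ
  set c : ι → K := fun v => φ fun j => if v = j then 1 else 0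
  have hφc : ∀ y, φ y = ∑ v, y v * c v := φ.pi_apply_eq_sum_univ
  have hpderiv : ∀ j, pderiv j (∑ v, c v • f v) = 0 := fun j =>
    MvPolynomial.funext fun q => by
      simpa [hφc, map_sum, mul_comm] using hφ _ (Submodule.subset_span ⟨(q, j), rfl⟩)
  have hsum : ∑ v, c v • f v = 0 := by
    rw [eq_C_of_forall_pderiv_eq_zero hpderiv]
    simp [coeff_sum, h0]
  have hc : c = 0 := funext (Fintype.linearIndependent_iff.mp hli c hsum)
  exact LinearMap.ext fun y => by simp [hφc, hc]

theorem algebraicIndependent_sumCopies {ρ : Type*} [Fintype ρ] (hli : LinearIndependent K f)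
    (h0 : ∀ v, coeff 0 (f v) = 0) (e : ι ↪ ρ) :
    AlgebraicIndependent K fun v => sumCopies ρ (f v) := by
  classical
  obtain ⟨x, hx⟩ := exists_det_ne_zero_of_span_eq_top _ (span_eval_pderiv_eq_top hli h0)
  refine algebraicIndependent_of_det_ne_zero _ (fun i => pderiv (e i, (x i).2)) fun h => hx ?_
  let w : ρ × σ → K := fun y => Function.extend e (fun i => (x i).1) 0 y.1 y.2
  have heval : (eval w).mapMatrix (Matrix.of fun i v => pderiv (e i, (x i).2)
      (sumCopies ρ (f v))) = Matrix.of fun i v => eval (x i).1 (pderiv (x i).2 (f v)) := by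
    ext i v
    simp [w, pderiv_sumCopies, eval_rename, Function.comp_def, e.injective.extend_apply]
  rw [← heval, ← RingHom.map_det, h, map_zero]

end

/-- Concrete model of the map `i_r : Sym(V) → Sym(W)^{⊗r}`.  Here `Sym(W)` for `W = ℂ^N` is
modelled by the polynomial ring `ℂ[y_1, …, y_N]`, the subspace `V ⊆ Sym(W)` is given together
with a basis `b : Fin κ → V`, `Sym(V)` is modelled by the polynomial ring `ℂ[z_1, …, z_κ]`
(via the basis `b`), and `Sym(W)^{⊗r}` is modelled by the polynomial ring in `r` disjoint
copies of the variables, the `s`-th factor inclusion being the renaming `y_j ↦ y_{(s,j)}`.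
The map `i_r` sends the basis vector `z_v` of `V` to `∑_{s=1}^r 1 ⊗ ⋯ ⊗ b v ⊗ ⋯ ⊗ 1`. -/
noncomputable def iMap (N κ r : ℕ) (V : Submodule ℂ (MvPolynomial (Fin N) ℂ))
    (b : Module.Basis (Fin κ) ℂ V) :
    MvPolynomial (Fin κ) ℂ →ₐ[ℂ] MvPolynomial (Fin r × Fin N) ℂ :=
  MvPolynomial.aeval fun v : Fin κ =>
    ∑ s : Fin r, MvPolynomial.rename (Prod.mk s) ((b v : MvPolynomial (Fin N) ℂ))

/-- If `V` is a finite-dimensional subspace of `Sym(W)` spanned by homogeneous elements of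
positive degree, then for all sufficiently large `r` the map `i_r : Sym(V) → Sym(W)^{⊗r}`
is injective. -/
theorem iMap_injective_for_large_r (N κ : ℕ) (V : Submodule ℂ (MvPolynomial (Fin N) ℂ))
    (b : Module.Basis (Fin κ) ℂ V)
    (hV : ∃ S : Set (MvPolynomial (Fin N) ℂ), V = Submodule.span ℂ S ∧
      ∀ f ∈ S, ∃ d : ℕ, 1 ≤ d ∧ f ∈ MvPolynomial.homogeneousSubmodule (Fin N) ℂ d) :
    ∃ r₀ : ℕ, ∀ r : ℕ, r₀ ≤ r → Function.Injective (iMap N κ r V b) := by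
  obtain ⟨S, hVS, hS⟩ := hV
  have h0 : ∀ v, coeff 0 (b v : MvPolynomial (Fin N) ℂ) = 0 :=
    fun v => coeff_zero_eq_zero_of_mem_span_homogeneous hS (hVS ▸ (b v).2)
  have hli : LinearIndependent ℂ fun v => (b v : MvPolynomial (Fin N) ℂ) :=
    b.linearIndependent.map' V.subtype V.ker_subtype
  exact ⟨κ, fun r hr => algebraicIndependent_sumCopies hli h0 (Fin.castLEEmb hr)⟩
end

section
/- Let W be a finite-dimensional complex vector space and let V be a finite-dimensional linear subspace of Sym(W) spanned by homogeneous elements of positive degree. Then there exists r₀ such that for all r ≥ r₀ the following holds: for any y, z ∈ Sym(V) with z ≠ 0, if i_r(z) divides i_r(y) in Sym(W)^{⊗r}, then z divides y in Sym(V). (Equivalently: if x ∈ Frac(Sym(V)) satisfies i_r(x) ∈ Sym(W)^{⊗r}, then x ∈ Sym(V).) -/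
open Finset

theorem IsPrimitiveRoot.geom_sum_pow {K : Type*} [CommRing K] [IsDomain K] {ζ : K} {m : ℕ}
    (hζ : IsPrimitiveRoot ζ m) (d : ℕ) :
    ∑ k ∈ range m, (ζ ^ d) ^ k = if m ∣ d then (m : K) else 0 := by
  split_ifs with h
  · simp [(hζ.pow_eq_one_iff_dvd d).2 h]
  · have hne : ζ ^ d - 1 ≠ 0 := sub_ne_zero.2 (mt (hζ.pow_eq_one_iff_dvd d).1 h)
    have hgeom := geom_sum_mul (ζ ^ d) m
    rw [← pow_mul, mul_comm d, pow_mul, hζ.pow_eq_one, one_pow, sub_self] at hgeom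
    exact (mul_eq_zero.1 hgeom).resolve_right hne

section PowerSum

variable {R : Type*} [CommRing R]

def powerSum (d : ℕ) : Multiset R →+ R :=
  Multiset.sumAddMonoidHom.comp (Multiset.mapAddMonoidHom (· ^ d))

theorem powerSum_apply (d : ℕ) (L : Multiset R) : powerSum d L = (L.map (· ^ d)).sum := rfl

theorem powerSum_map_smul {K : Type*} [Field K] [Algebra K R] (d : ℕ) (a : K)
    (L : Multiset R) : powerSum d (L.map (a • ·)) = a ^ d • powerSum d L := by
  simp [powerSum_apply, Multiset.map_map, smul_pow, Multiset.smul_sum]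

theorem IsPrimitiveRoot.powerSum_orbit {K : Type*} [Field K] [Algebra K R] {ζ : K} {m : ℕ}
    (hζ : IsPrimitiveRoot ζ m) (d : ℕ) (L : Multiset R) :
    powerSum d (∑ k ∈ range m, L.map (ζ ^ k • ·)) =
      (if m ∣ d then (m : K) else 0) • powerSum d L := by
  simp_rw [map_sum, powerSum_map_smul, ← pow_mul, mul_comm _ d, pow_mul, ← Finset.sum_smul,
    hζ.geom_sum_pow]

theorem exists_powerSum_eq (K : Type*) [Field K] [IsAlgClosed K] [CharZero K] [Algebra K R]
    {m : ℕ} (hm : 0 < m) (c : R) : ∃ L : Multiset R, powerSum m L = c := by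
  obtain rfl | hm2 : m = 1 ∨ 2 ≤ m := by omega
  · exact ⟨{c}, by simp [powerSum_apply]⟩
  have : NeZero m := ⟨hm.ne'⟩
  obtain ⟨ζ, hζ⟩ := HasEnoughRootsOfUnity.exists_primitiveRoot K m
  choose ω hω using fun k : ℕ => IsAlgClosed.exists_pow_nat_eq ((ζ ^ (m - 1)) ^ k) hm
  set p : R := ((m : K) ^ 2)⁻¹ • c
  refine ⟨(range m).val.map fun k => ω k • (ζ ^ k • p + 1), ?_⟩
  -- in `∑ k, ζ^{k(m-1)} (1 + ζ^k p)^m` only the linear term of the binomial expansion survives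
  have hdvd : ∀ j ∈ range (m + 1), m ∣ m - 1 + j ↔ j = 1 := by
    intro j hj
    rw [mem_range] at hj
    refine ⟨fun h => ?_, fun h => by simp [h, Nat.sub_add_cancel hm]⟩
    have := Nat.eq_of_dvd_of_lt_two_mul (by omega) h (by omega)
    omega
  have h1 : 1 ∈ range (m + 1) := mem_range.2 (by omega)
  calc powerSum m ((range m).val.map fun k => ω k • (ζ ^ k • p + 1))
      = ∑ j ∈ range (m + 1), (∑ k ∈ range m, (ζ ^ (m - 1 + j)) ^ k) • (p ^ j * m.choose j) := by
        simp_rw [powerSum_apply, Multiset.map_map, Function.comp_apply, smul_pow, hω, add_pow,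
          one_pow, mul_one, Finset.smul_sum, Finset.sum_smul]
        rw [← Finset.sum_eq_multiset_sum, Finset.sum_comm]
        refine Finset.sum_congr rfl fun j _ => Finset.sum_congr rfl fun k _ => ?_
        rw [smul_pow, smul_mul_assoc, smul_smul, ← pow_mul, ← pow_mul, ← pow_add]
        ring_nf
    _ = (m : K) • (p * m) := by
        rw [Finset.sum_eq_single_of_mem 1 h1 fun j hj hj1 => by
          rw [hζ.geom_sum_pow, if_neg (mt (hdvd j hj).1 hj1), zero_smul]]
        rw [hζ.geom_sum_pow, if_pos ((hdvd 1 h1).2 rfl), pow_one, Nat.choose_one_right]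
    _ = c := by
        have hm0 : (m : K) ≠ 0 := Nat.cast_ne_zero.2 hm.ne'
        rw [mul_comm, ← nsmul_eq_mul, ← Nat.cast_smul_eq_nsmul K, smul_smul, smul_smul,
          show (m : K) * m * ((m : K) ^ 2)⁻¹ = 1 by field_simp, one_smul]

theorem exists_forall_powerSum_eq (K : Type*) [Field K] [IsAlgClosed K] [CharZero K]
    [Algebra K R] (D : ℕ) (c : ℕ → R) :
    ∃ L : Multiset R, ∀ d ∈ Icc 1 D, powerSum d L = c d := by
  induction D with
  | zero => exact ⟨0, by simp⟩
  | succ D ih =>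
    obtain ⟨L, hL⟩ := ih
    obtain ⟨ζ, hζ⟩ := HasEnoughRootsOfUnity.exists_primitiveRoot K (D + 1)
    have hD : ((D + 1 : ℕ) : K) ≠ 0 := Nat.cast_ne_zero.2 D.succ_ne_zero
    obtain ⟨L', hL'⟩ := exists_powerSum_eq K D.succ_pos
      (((D + 1 : ℕ) : K)⁻¹ • (c (D + 1) - powerSum (D + 1) L))
    refine ⟨L + ∑ k ∈ range (D + 1), L'.map (ζ ^ k • ·), fun d hd => ?_⟩
    rw [map_add, hζ.powerSum_orbit]
    obtain hd | rfl : d ∈ Icc 1 D ∨ d = D + 1 := by simp only [mem_Icc] at hd ⊢; omega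
    · have hdD := mem_Icc.1 hd
      rw [hL d hd, if_neg (Nat.not_dvd_of_pos_of_lt hdD.1 (by omega)), zero_smul, add_zero]
    · rw [if_pos dvd_rfl, hL', smul_smul, mul_inv_cancel₀ hD, one_smul, add_sub_cancel]

end PowerSum

theorem AddSubmonoid.exists_list_map_sum_eq_of_mem_closure_range {α M : Type*} [AddMonoid M]
    {f : α → M} {x : M} (hx : x ∈ AddSubmonoid.closure (Set.range f)) :
    ∃ l : List α, (l.map f).sum = x := by
  induction hx using AddSubmonoid.closure_induction with
  | mem _ h => obtain ⟨a, rfl⟩ := h; exact ⟨[a], by simp⟩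
  | zero => exact ⟨[], rfl⟩
  | add _ _ _ _ hx hy =>
    obtain ⟨l₁, rfl⟩ := hx
    obtain ⟨l₂, rfl⟩ := hy
    exact ⟨l₁ ++ l₂, by simp⟩

theorem Fin.sum_univ_getD_eq_sum_map {α M : Type*} [AddCommMonoid M] {l : List α} {r : ℕ}
    (hr : l.length ≤ r) (a : α) {F : α → M} (hF : F a = 0) :
    ∑ s : Fin r, F (l.getD s a) = (l.map F).sum := by
  induction l generalizing r with
  | nil => simp [hF]
  | cons x l ih =>
    obtain ⟨r, rfl⟩ : ∃ r', r = r' + 1 := ⟨r - 1, by rw [List.length_cons] at hr; omega⟩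
    rw [Fin.sum_univ_succ, List.map_cons, List.sum_cons, ← ih (by simpa using hr)]
    simp only [Fin.val_zero, List.getD_cons_zero, Fin.val_succ, List.getD_cons_succ]

theorem span_algebraMap_comp_eq_top {K R ι : Type*} [Field K] [CommRing R] [Algebra K R]
    [Finite ι] {s : Set (ι → K)} (hs : Submodule.span K s = ⊤) :
    Submodule.span R ((algebraMap K R ∘ ·) '' s) = ⊤ := by
  classical
  rw [eq_top_iff, ← (Pi.basisFun R ι).span_eq, Submodule.span_le]
  rintro _ ⟨i, rfl⟩
  have hi : Pi.single i 1 ∈ Submodule.span K s := hs ▸ Submodule.mem_top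
  have := Submodule.mem_map_of_mem (f := LinearMap.compLeft (Algebra.linearMap K R) ι) hi
  rw [Submodule.map_span] at this
  refine Submodule.span_le_restrictScalars K R _ ?_
  have hsingle :
      LinearMap.compLeft (Algebra.linearMap K R) ι (Pi.single i 1) = Pi.basisFun R ι i := by
    ext j
    by_cases h : j = i <;> simp [h]
  rwa [hsingle] at this

namespace MvPolynomial

section Field

variable {σ K R : Type*} [Field K] [CommRing R] [Algebra K R]

theorem IsHomogeneous.aeval_smul {f : MvPolynomial σ K} {n : ℕ} (hf : f.IsHomogeneous n)
    (q : R) (p : σ → R) : MvPolynomial.aeval (q • p) f = q ^ n * MvPolynomial.aeval p f := by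
  conv_lhs => rw [f.as_sum]
  conv_rhs => rw [f.as_sum]
  rw [map_sum, map_sum, Finset.mul_sum]
  refine Finset.sum_congr rfl fun s hs => ?_
  rw [MvPolynomial.aeval_monomial, MvPolynomial.aeval_monomial, ← hf (mem_support_iff.1 hs)]
  simp only [Finsupp.prod, Pi.smul_apply, smul_eq_mul, mul_pow, Finset.prod_mul_distrib,
    Finset.prod_pow_eq_pow_sum, Finsupp.weight_apply, Finsupp.sum, Pi.one_apply, mul_one]
  ring

theorem span_range_eval_eq_top [Infinite K] {ι : Type*} [Finite ι] {g : ι → MvPolynomial σ K}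
    (hg : LinearIndependent K g) :
    Submodule.span K (Set.range fun (w : σ → K) i => eval w (g i)) = ⊤ := by
  classical
  have := Fintype.ofFinite ι
  by_contra hne
  obtain ⟨φ, hφ0, hφ⟩ :=
    Submodule.exists_dual_map_eq_bot_of_lt_top (lt_top_iff_ne_top.2 hne) inferInstance
  set c : ι → K := fun i => φ fun j => if i = j then 1 else 0
  have hrel : ∑ i, c i • g i = 0 := funext fun w => by
    have hw := Submodule.mem_map_of_mem (f := φ)
      (Submodule.subset_span (Set.mem_range_self (f := fun (w : σ → K) i => eval w (g i)) w))
    rw [hφ, Submodule.mem_bot, φ.pi_apply_eq_sum_univ] at hw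
    simpa [c, smul_eval, mul_comm] using hw
  have hc := Fintype.linearIndependent_iff.1 hg c hrel
  refine hφ0 (LinearMap.ext fun x => ?_)
  rw [φ.pi_apply_eq_sum_univ x]
  exact Finset.sum_eq_zero fun i _ => (congrArg (x i • ·) (hc i)).trans (smul_zero _)

theorem aeval_getD_sum_rename_prodMk (l : List (σ → R)) {r : ℕ} (hr : l.length ≤ r)
    {f : MvPolynomial σ K} (hf : constantCoeff f = 0) :
    aeval (fun x : Fin r × σ => l.getD x.1 0 x.2) (∑ s : Fin r, rename (Prod.mk s) f) =
      (l.map fun p => aeval p f).sum := by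
  simp only [map_sum, aeval_rename]
  exact Fin.sum_univ_getD_eq_sum_map hr 0 (F := fun p => aeval p f) (by simp [aeval_zero, hf])

theorem constantCoeff_eq_zero_of_mem_span {S : Set (MvPolynomial σ K)}
    (hS : ∀ f ∈ S, ∃ n, 0 < n ∧ f.IsHomogeneous n) {f : MvPolynomial σ K}
    (hf : f ∈ Submodule.span K S) : constantCoeff f = 0 := by
  induction hf using Submodule.span_induction with
  | mem f hf =>
    obtain ⟨n, hn, hfn⟩ := hS f hf
    rw [constantCoeff_eq]
    exact hfn.coeff_eq_zero (by rw [map_zero]; omega)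
  | zero => simp
  | add f g _ _ hf hg => simp [hf, hg]
  | smul a f _ hf => simp [hf]

end Field

section IsAlgClosed

variable {σ K R : Type*} [Field K] [IsAlgClosed K] [CharZero K] [CommRing R] [Algebra K R]

theorem exists_list_sum_aeval_eq {ι : Type*} [Finite ι] {g : ι → MvPolynomial σ K}
    (hg : LinearIndependent K g) {n : ι → ℕ} (hn : ∀ i, 0 < n i)
    (hgn : ∀ i, (g i).IsHomogeneous (n i)) (c : ι → R) :
    ∃ l : List (σ → R), ∀ i, (l.map fun p => aeval p (g i)).sum = c i := by
  have := Fintype.ofFinite ι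
  set ev : (σ → R) → ι → R := fun p i => aeval p (g i)
  have smul_mem : ∀ (a : R) p, a • ev p ∈ AddSubmonoid.closure (Set.range ev) := by
    intro a p
    -- rescale `p` by scalars whose power sums equal `a` in every degree `n i`
    obtain ⟨L, hL⟩ := exists_forall_powerSum_eq K (Finset.univ.sup n) fun _ => a
    have : a • ev p = (L.map fun q => ev (q • p)).sum := by
      ext i
      simp only [ev, Pi.smul_apply, smul_eq_mul, Pi.multiset_sum_apply, Multiset.map_map,
        Function.comp_def, (hgn i).aeval_smul, Multiset.sum_map_mul_right, ← powerSum_apply]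
      rw [hL (n i) (Finset.mem_Icc.2 ⟨hn i, Finset.le_sup (Finset.mem_univ i)⟩)]
    rw [this]
    exact AddSubmonoid.multiset_sum_mem _ _ fun x hx => by
      obtain ⟨q, -, rfl⟩ := Multiset.mem_map.1 hx
      exact AddSubmonoid.subset_closure (Set.mem_range_self _)
  have hspan : Submodule.span R (Set.range ev) = ⊤ := by
    refine eq_top_mono (Submodule.span_mono ?_)
      (span_algebraMap_comp_eq_top (R := R) (span_range_eval_eq_top hg))
    rintro _ ⟨_, ⟨w, rfl⟩, rfl⟩
    exact ⟨algebraMap K R ∘ w, by ext i; simp [ev, aeval_algebraMap_apply]⟩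
  have hc : c ∈ AddSubmonoid.closure (Set.range ev) := by
    have : c ∈ (Submodule.span R (Set.range ev)).toAddSubmonoid := hspan ▸ Submodule.mem_top
    rw [Submodule.span_eq_closure] at this
    refine AddSubmonoid.closure_le.2 ?_ this
    rintro _ ⟨a, -, _, ⟨p, rfl⟩, rfl⟩
    exact smul_mem a p
  obtain ⟨l, hl⟩ := AddSubmonoid.exists_list_map_sum_eq_of_mem_closure_range hc
  exact ⟨l, fun i => by rw [← hl, Pi.list_sum_apply, List.map_map]; rfl⟩

theorem exists_list_sum_aeval_eq_of_span {S : Set (MvPolynomial σ K)}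
    (hS : ∀ f ∈ S, ∃ n, 0 < n ∧ f.IsHomogeneous n) [FiniteDimensional K (Submodule.span K S)]
    (φ : Submodule.span K S →ₗ[K] R) :
    ∃ l : List (σ → R), ∀ f : Submodule.span K S,
      (l.map fun p => aeval p (f : MvPolynomial σ K)).sum = φ f := by
  obtain ⟨T, hTS, hTS_span, hT⟩ := exists_linearIndependent K S
  have hT_mem : ∀ t ∈ T, t ∈ Submodule.span K S := fun t ht => hTS_span ▸ Submodule.subset_span ht
  have : Finite T := LinearIndependent.finite (M := Submodule.span K S)
    (f := fun t : T => ⟨t, hT_mem t t.2⟩) (.of_comp (Submodule.span K S).subtype hT)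
  choose n hn hTn using fun t : T => hS t (hTS t.2)
  obtain ⟨l, hl⟩ := exists_list_sum_aeval_eq hT hn hTn fun t => φ ⟨t, hT_mem t t.2⟩
  suffices key : ∀ f (hf : f ∈ Submodule.span K T),
      (l.map fun p => aeval p f).sum = φ ⟨f, hTS_span ▸ hf⟩ from
    ⟨l, fun f => key f (by rw [hTS_span]; exact f.2)⟩
  intro f hf
  induction hf using Submodule.span_induction with
  | mem f hf => exact hl ⟨f, hf⟩
  | zero =>
    refine Eq.trans ?_ (map_zero φ).symm
    simp
  | add f g _ _ hf hg =>
    simp only [map_add, List.sum_map_add, hf, hg]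
    exact (map_add φ _ _).symm
  | smul a f hfT hf =>
    refine Eq.trans ?_ (map_smul φ a ⟨f, hTS_span ▸ hfT⟩).symm
    simp only [map_smul, ← hf, List.smul_sum, List.map_map, Function.comp_def]

end IsAlgClosed

end MvPolynomial

open MvPolynomial in
theorem exists_leftInverse_iMap (N κ : ℕ) (V : Submodule ℂ (MvPolynomial (Fin N) ℂ))
    (b : Module.Basis (Fin κ) ℂ V)
    (hV : ∃ S : Set (MvPolynomial (Fin N) ℂ), V = Submodule.span ℂ S ∧
      ∀ f ∈ S, ∃ d : ℕ, 1 ≤ d ∧ f ∈ homogeneousSubmodule (Fin N) ℂ d) :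
    ∃ r₀ : ℕ, ∀ r, r₀ ≤ r → ∃ ρ : MvPolynomial (Fin r × Fin N) ℂ →ₐ[ℂ] MvPolynomial (Fin κ) ℂ,
      Function.LeftInverse ρ (iMap N κ r V b) := by
  obtain ⟨S, rfl, hS⟩ := hV
  simp only [mem_homogeneousSubmodule] at hS
  have := Module.Finite.of_basis b
  obtain ⟨l, hl⟩ :=
    exists_list_sum_aeval_eq_of_span hS (b.constr ℂ (X : Fin κ → MvPolynomial (Fin κ) ℂ))
  refine ⟨l.length, fun r hr => ⟨aeval fun x => l.getD x.1 0 x.2, fun y => ?_⟩⟩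
  have hcomp : (aeval fun x : Fin r × Fin N => l.getD x.1 0 x.2).comp
      (iMap N κ r (Submodule.span ℂ S) b) = AlgHom.id ℂ _ := algHom_ext fun u => by
    rw [AlgHom.comp_apply, iMap, aeval_X, aeval_getD_sum_rename_prodMk l hr
      (constantCoeff_eq_zero_of_mem_span hS (b u).2), hl, b.constr_basis, AlgHom.id_apply]
  exact DFunLike.congr_fun hcomp y

/-- If `V` is a finite-dimensional subspace of `Sym(W)` spanned by homogeneous elements of
positive degree, then for all sufficiently large `r`: whenever `i_r(z)` divides `i_r(y)` in
`Sym(W)^{⊗r}` with `z ≠ 0`, already `z` divides `y` in `Sym(V)`.  (Equivalently, an element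
`x ∈ Frac(Sym(V))` with `i_r(x) ∈ Sym(W)^{⊗r}` lies in `Sym(V)`.) -/
theorem iMap_divides_descend_for_large_r (N κ : ℕ) (V : Submodule ℂ (MvPolynomial (Fin N) ℂ))
    (b : Module.Basis (Fin κ) ℂ V)
    (hV : ∃ S : Set (MvPolynomial (Fin N) ℂ), V = Submodule.span ℂ S ∧
      ∀ f ∈ S, ∃ d : ℕ, 1 ≤ d ∧ f ∈ MvPolynomial.homogeneousSubmodule (Fin N) ℂ d) :
    ∃ r₀ : ℕ, ∀ r : ℕ, r₀ ≤ r → ∀ y z : MvPolynomial (Fin κ) ℂ, z ≠ 0 →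
      iMap N κ r V b z ∣ iMap N κ r V b y → z ∣ y := by
  obtain ⟨r₀, hr₀⟩ := exists_leftInverse_iMap N κ V b hV
  refine ⟨r₀, fun r hr y z _ hdvd => ?_⟩
  obtain ⟨ρ, hρ⟩ := hr₀ r hr
  simpa only [hρ y, hρ z] using map_dvd ρ hdvd
end

section
/- Let d be a positive integer, let e ∈ ℤ^d, and let p be a polynomial in d variables with rational coefficients. Then the formal power series ∑_{k ∈ ℕ^d} p(k) C_{k+e} t^{|k|} ∈ ℚ[[t]] is a rational function of t with poles only at t = 1/a for integers 1 ≤ a ≤ d; that is, there exist non-negative integers m_1, …, m_d such that (∏_{a=1}^{d} (1 − a t)^{m_a}) · ∑_{k ∈ ℕ^d} p(k) C_{k+e} t^{|k|} is a polynomial in ℚ[t]. -/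
/-!
Write `F_S(e, p)` for the series of the theorem with `k` restricted to vectors supported on `S`.
The identity `k_i C_{k+e} = |k + e| C_{k+e-δ_i} - e_i C_{k+e}` turns multiplication of the weight
`p` by `X_i` into a shift of `e` together with multiplication of the `n`-th coefficient by a
polynomial in `n`, i.e. by a polynomial in the operator `t d/dt`, which keeps a series rational
with denominator a product of factors `1 - a t`. This reduces everything to `p = 1`. There the
Pascal recurrence `C_v = ∑_i C_{v-δ_i}` (valid for `|v| ≠ 0`) makes the coefficients of
`(1 - |S| t) F_S(e)` and of `∑_{i ∈ S} F_{S∖i}(e - δ_i) + ∑_{i ∉ S} F_S(e - δ_i)` agree in all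
large degrees, and induction on `S` and on `∑_{i ∉ S} max(e_i, 0)` concludes, since `F_S(e) = 0`
as soon as `e_i < 0` for some `i ∉ S`.
-/

/-- The multinomial coefficient `C_k = (k_1 + ⋯ + k_d)!/(k_1! ⋯ k_d!)` for an integer vector
`k ∈ ℤ^d`, with the convention `C_k = 0` if some coordinate of `k` is negative. -/
noncomputable def intMultinomial {d : ℕ} (k : Fin d → ℤ) : ℕ :=
  if ∀ i, 0 ≤ k i then Nat.multinomial Finset.univ (fun i => (k i).toNat) else 0

open Finset
open scoped Polynomial

namespace PowerSeries

variable {R : Type*} [CommRing R]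

def withDenomIn (M : Submonoid R[X]) : AddSubgroup R⟦X⟧ where
  carrier := {F | ∃ q ∈ M, ∃ P : R[X], (q : R⟦X⟧) * F = P}
  zero_mem' := ⟨1, M.one_mem, 0, by simp⟩
  add_mem' := by
    rintro F G ⟨q, hq, P, hP⟩ ⟨r, hr, Q, hQ⟩
    refine ⟨q * r, M.mul_mem hq hr, r * P + q * Q, ?_⟩
    push_cast
    linear_combination (r : R⟦X⟧) * hP + (q : R⟦X⟧) * hQ
  neg_mem' := by
    rintro F ⟨q, hq, P, hP⟩
    exact ⟨q, hq, -P, by push_cast; rw [mul_neg, hP]⟩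

variable {M N : Submonoid R[X]} {F : R⟦X⟧}

theorem coe_mem_withDenomIn (P : R[X]) : (P : R⟦X⟧) ∈ withDenomIn M :=
  ⟨1, M.one_mem, P, by simp⟩

theorem polynomial_mul_mem_withDenomIn (Q : R[X]) (hF : F ∈ withDenomIn M) :
    (Q : R⟦X⟧) * F ∈ withDenomIn M := by
  obtain ⟨q, hq, P, hP⟩ := hF
  exact ⟨q, hq, Q * P, by push_cast; rw [mul_left_comm, hP]⟩

theorem C_mul_mem_withDenomIn (c : R) (hF : F ∈ withDenomIn M) : C c * F ∈ withDenomIn M := by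
  simpa using polynomial_mul_mem_withDenomIn (Polynomial.C c) hF

theorem withDenomIn_mono (hMN : M ≤ N) : withDenomIn M ≤ withDenomIn N :=
  fun _ ⟨q, hq, P, hP⟩ => ⟨q, hMN hq, P, hP⟩

theorem mem_withDenomIn_of_mul_mem {q : R[X]} (hq : q ∈ M)
    (hF : (q : R⟦X⟧) * F ∈ withDenomIn M) : F ∈ withDenomIn M := by
  obtain ⟨r, hr, P, hP⟩ := hF
  exact ⟨r * q, M.mul_mem hr hq, P, by push_cast; rw [mul_assoc, hP]⟩

theorem mem_withDenomIn_of_coeff_eq_zero {N : ℕ} (hF : ∀ n ≥ N, coeff n F = 0) :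
    F ∈ withDenomIn M := by
  convert coe_mem_withDenomIn (M := M) (trunc N F)
  ext n
  rw [Polynomial.coeff_coe, coeff_trunc]
  split_ifs with hn
  · rfl
  · exact hF n (not_lt.1 hn)

theorem X_mul_derivative (F : R⟦X⟧) : X * d⁄dX R F = mk fun n => (n : R) * coeff n F := by
  ext (_ | n)
  · simp
  · rw [coeff_succ_X_mul, coeff_derivative, coeff_mk]
    push_cast
    ring

theorem mk_natCast_mul_coeff_mem_withDenomIn (hF : F ∈ withDenomIn M) :
    (mk fun n => (n : R) * coeff n F) ∈ withDenomIn M := by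
  obtain ⟨q, hq, P, hP⟩ := hF
  have hderiv : (Polynomial.derivative P : R⟦X⟧)
      = q * d⁄dX R F + F * (Polynomial.derivative q : R⟦X⟧) := by
    simpa [derivative_coe, hP, smul_eq_mul, mul_comm] using (d⁄dX R).leibniz (q : R⟦X⟧) F
  refine ⟨q * q, M.mul_mem hq hq,
    Polynomial.X * (q * Polynomial.derivative P - P * Polynomial.derivative q), ?_⟩
  rw [← X_mul_derivative]
  push_cast
  linear_combination -(X : R⟦X⟧) * (q : R⟦X⟧) * hderiv
    - X * (Polynomial.derivative q : R⟦X⟧) * hP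

theorem mk_eval_mul_coeff_mem_withDenomIn (Q : R[X]) (hF : F ∈ withDenomIn M) :
    (mk fun n => Q.eval (n : R) * coeff n F) ∈ withDenomIn M := by
  induction Q using Polynomial.induction_on with
  | C a =>
    convert polynomial_mul_mem_withDenomIn (Polynomial.C a) hF
    ext n
    simp
  | add Q₁ Q₂ h₁ h₂ =>
    convert add_mem h₁ h₂
    ext n
    simp [add_mul]
  | monomial k a ih =>
    convert mk_natCast_mul_coeff_mem_withDenomIn ih using 2
    ext n
    simp [pow_succ]
    ring

end PowerSeries

open PowerSeries

/-- The index `a = 0` contributes the factor `1`; including it makes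
`1 - |S| X ∈ poleFactors R |S|` hold also for `S = ∅`. -/
noncomputable def poleFactors (R : Type*) [CommRing R] (D : ℕ) : Submonoid R[X] :=
  Submonoid.closure
    (Set.range fun a : Fin (D + 1) => 1 - Polynomial.C ((a : ℕ) : R) * Polynomial.X)

section PoleFactors

variable {R : Type*} [CommRing R]

theorem one_sub_C_mul_X_mem_poleFactors (D : ℕ) :
    1 - Polynomial.C (D : R) * Polynomial.X ∈ poleFactors R D :=
  Submonoid.subset_closure ⟨Fin.last D, by simp⟩

theorem poleFactors_mono {D D' : ℕ} (h : D ≤ D') : poleFactors R D ≤ poleFactors R D' :=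
  Submonoid.closure_mono <| Set.range_subset_iff.2 fun a =>
    ⟨Fin.castLE (by omega) a, by simp⟩

theorem exists_prod_eq_of_mem_poleFactors {D : ℕ} {q : R[X]} (hq : q ∈ poleFactors R D) :
    ∃ m : Fin D → ℕ,
      (q : R⟦X⟧) = ∏ a : Fin D, (1 - C (((a : ℕ) + 1 : ℕ) : R) * X) ^ m a := by
  obtain ⟨m, rfl⟩ := Submonoid.exists_of_mem_closure_range _ q hq
  refine ⟨fun a => m a.succ, ?_⟩
  rw [Fin.prod_univ_succ, ← Polynomial.coeToPowerSeries.ringHom_apply, map_mul, map_prod]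
  simp only [map_pow, map_sub, map_one, map_mul, Polynomial.coeToPowerSeries.ringHom_apply,
    Polynomial.coe_C, Polynomial.coe_X, Fin.val_zero, Nat.cast_zero, map_zero, zero_mul, sub_zero,
    one_pow, one_mul, Fin.val_succ]

end PoleFactors

theorem Nat.add_one_mul_multinomial_add_single {α : Type*} [DecidableEq α] {s : Finset α} {i : α}
    (hi : i ∈ s) (f : α → ℕ) :
    (f i + 1) * Nat.multinomial s (f + Pi.single i 1)
      = (∑ j ∈ s, f j + 1) * Nat.multinomial s f := by
  have hrest : Nat.multinomial (s.erase i) (f + Pi.single i 1) = Nat.multinomial (s.erase i) f :=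
    Nat.multinomial_congr fun j hj => by simp [ne_of_mem_erase hj]
  have hsum : ∑ j ∈ s.erase i, (f + Pi.single i 1 : α → ℕ) j = ∑ j ∈ s.erase i, f j :=
    sum_congr rfl fun j hj => by simp [ne_of_mem_erase hj]
  rw [← insert_erase hi, Nat.multinomial_insert (notMem_erase i s),
    Nat.multinomial_insert (notMem_erase i s), hrest, hsum, sum_insert (notMem_erase i s)]
  simp only [Pi.add_apply, Pi.single_eq_same]
  rw [← mul_assoc, ← mul_assoc, add_right_comm, Nat.add_one_mul_choose_eq, mul_comm (f i + 1)]

section IntMultinomial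

variable {d : ℕ}

theorem intMultinomial_natCast (f : Fin d → ℕ) :
    intMultinomial (fun i => (f i : ℤ)) = Nat.multinomial univ f := by
  simp [intMultinomial]

theorem intMultinomial_eq_zero_of_neg {v : Fin d → ℤ} {i : Fin d} (h : v i < 0) :
    intMultinomial v = 0 :=
  if_neg fun hv => (hv i).not_gt h

theorem mul_intMultinomial (v : Fin d → ℤ) (i : Fin d) :
    v i * (intMultinomial v : ℤ) = (∑ j, v j) * intMultinomial (v - Pi.single i 1) := by
  by_cases hw : ∀ j, 0 ≤ (v - Pi.single i 1 : Fin d → ℤ) j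
  · obtain ⟨f, rfl⟩ : ∃ f : Fin d → ℕ, v = fun j => ((f + Pi.single i 1 : Fin d → ℕ) j : ℤ) := by
      refine ⟨fun j => ((v - Pi.single i 1 : Fin d → ℤ) j).toNat, funext fun j => ?_⟩
      have := hw j
      rcases eq_or_ne j i with rfl | hji
      · simp_all
        omega
      · simp_all [Pi.single_apply]
    have hsub : (fun j => ((f + Pi.single i 1 : Fin d → ℕ) j : ℤ)) - Pi.single i 1
        = fun j => (f j : ℤ) := by
      ext j
      rcases eq_or_ne j i with rfl | hji
      all_goals simp [Pi.single_apply, *]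
    rw [hsub, intMultinomial_natCast, intMultinomial_natCast]
    have hsum : ∑ j, (f + Pi.single i 1 : Fin d → ℕ) j = ∑ j, f j + 1 := by
      simp [sum_add_distrib]
    rw [← Nat.cast_sum, hsum]
    simp only [Pi.add_apply, Pi.single_eq_same]
    exact_mod_cast Nat.add_one_mul_multinomial_add_single (mem_univ i) f
  · obtain ⟨j, hj⟩ := not_forall.1 hw
    replace hj := not_le.1 hj
    rw [intMultinomial_eq_zero_of_neg hj]
    rcases eq_or_ne (v i) 0 with hvi | hvi
    · simp [hvi]
    · rw [intMultinomial_eq_zero_of_neg (i := j)]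
      · simp
      · rcases eq_or_ne j i with rfl | hji
        · simp at hj
          omega
        · simpa [hji] using hj

theorem intMultinomial_eq_sum_sub_single {v : Fin d → ℤ} (hv : ∑ j, v j ≠ 0) :
    intMultinomial v = ∑ i, intMultinomial (v - Pi.single i 1) := by
  have h : (∑ j, v j) * (intMultinomial v : ℤ)
      = (∑ j, v j) * ∑ i, (intMultinomial (v - Pi.single i 1) : ℤ) := by
    rw [sum_mul, mul_sum]
    exact sum_congr rfl fun i _ => mul_intMultinomial v i
  exact_mod_cast mul_left_cancel₀ hv h

end IntMultinomial

theorem Finset.filter_piAntidiag_apply_eq_zero {ι : Type*} [DecidableEq ι] (s : Finset ι) (i : ι)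
    (n : ℕ) : (s.piAntidiag n).filter (fun k => k i = 0) = (s.erase i).piAntidiag n := by
  ext k
  simp only [mem_filter, mem_piAntidiag, mem_erase]
  constructor
  · rintro ⟨⟨hsum, hsupp⟩, hki⟩
    exact ⟨by rwa [sum_erase _ hki], fun j hj => ⟨by rintro rfl; exact hj hki, hsupp j hj⟩⟩
  · rintro ⟨hsum, hsupp⟩
    have hki : k i = 0 := by_contra fun h => (hsupp i h).1 rfl
    exact ⟨⟨by rwa [← sum_erase _ hki], fun j hj => (hsupp j hj).2⟩, hki⟩

theorem Finset.sum_filter_piAntidiag_succ_apply_ne_zero {ι M : Type*} [DecidableEq ι]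
    [AddCommMonoid M] {s : Finset ι} {i : ι} (hi : i ∈ s) (n : ℕ) (g : (ι → ℕ) → M) :
    ∑ k ∈ (s.piAntidiag (n + 1)).filter (fun k => k i ≠ 0), g k
      = ∑ k ∈ s.piAntidiag n, g (k + Pi.single i 1) := by
  symm
  refine sum_nbij' (fun k => k + Pi.single i 1) (fun k => k - Pi.single i 1) ?_ ?_ ?_ ?_ ?_
  · intro k hk
    simp only [mem_filter, mem_piAntidiag] at hk ⊢
    refine ⟨⟨?_, fun j hj => ?_⟩, by simp⟩
    · simp only [Pi.add_apply]
      rw [sum_add_distrib, hk.1, sum_pi_single', if_pos hi]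
    · rcases eq_or_ne j i with rfl | hji
      · exact hi
      · exact hk.2 j (by simpa [hji] using hj)
  · intro k hk
    simp only [mem_filter, mem_piAntidiag] at hk ⊢
    obtain ⟨⟨hsum, hsupp⟩, hki⟩ := hk
    have hk : k = (k - Pi.single i 1) + Pi.single i 1 := by
      ext j
      rcases eq_or_ne j i with rfl | hji
      · simp
        omega
      · simp [hji]
    refine ⟨?_, fun j hj => hsupp j fun hkj => hj (by simp [hkj])⟩
    rw [hk] at hsum
    simpa [sum_add_distrib, hi] using hsum
  · intro k _
    simp
  · intro k hk
    simp only [mem_filter] at hk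
    ext j
    rcases eq_or_ne j i with rfl | hji
    · simp
      omega
    · simp [hji]
  · intro k _
    rfl

theorem Finset.sum_piAntidiag_succ {ι M : Type*} [DecidableEq ι] [AddCommMonoid M]
    {s : Finset ι} {i : ι} (hi : i ∈ s) (n : ℕ) (g : (ι → ℕ) → M) :
    ∑ k ∈ s.piAntidiag (n + 1), g k
      = ∑ k ∈ (s.erase i).piAntidiag (n + 1), g k
        + ∑ k ∈ s.piAntidiag n, g (k + Pi.single i 1) := by
  rw [← sum_filter_add_sum_filter_not _ (fun k => k i = 0), filter_piAntidiag_apply_eq_zero,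
    ← sum_filter_piAntidiag_succ_apply_ne_zero hi]

theorem Finset.sum_eq_of_mem_piAntidiag {ι : Type*} [Fintype ι] [DecidableEq ι] {s : Finset ι}
    {n : ℕ} {k : ι → ℕ} (hk : k ∈ s.piAntidiag n) : ∑ j, k j = n := by
  rw [mem_piAntidiag] at hk
  rw [← hk.1]
  exact (sum_subset (subset_univ s) fun j _ hj => by_contra fun h => hj (hk.2 j h)).symm

theorem Fintype.filter_piFinset_range_sum_eq_piAntidiag {ι : Type*} [Fintype ι] [DecidableEq ι]
    (n : ℕ) :
    (Fintype.piFinset fun _ : ι => range (n + 1)).filter (fun k => ∑ i, k i = n)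
      = univ.piAntidiag n := by
  ext k
  simp only [mem_filter, Fintype.mem_piFinset, mem_range, mem_piAntidiag, mem_univ, implies_true,
    and_true]
  refine ⟨And.right, fun hk => ⟨fun i => ?_, hk⟩⟩
  exact Nat.lt_succ_of_le (hk ▸ single_le_sum (fun j _ => Nat.zero_le (k j)) (mem_univ i))

section MultinomialSeries

variable {R : Type*} [CommRing R] {d : ℕ}

noncomputable def multinomialSeries (S : Finset (Fin d)) (e : Fin d → ℤ)
    (p : MvPolynomial (Fin d) R) : R⟦X⟧ :=
  mk fun n => ∑ k ∈ S.piAntidiag n,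
    MvPolynomial.eval (fun i => (k i : R)) p * (intMultinomial (fun i => (k i : ℤ) + e i) : R)

variable {S : Finset (Fin d)} {e : Fin d → ℤ} {p q : MvPolynomial (Fin d) R}

theorem coeff_multinomialSeries (n : ℕ) :
    coeff n (multinomialSeries S e p) = ∑ k ∈ S.piAntidiag n,
      MvPolynomial.eval (fun i => (k i : R)) p * (intMultinomial (fun i => (k i : ℤ) + e i) : R) :=
  coeff_mk _ _

theorem sum_natCast_add_eq_of_mem_piAntidiag {k : Fin d → ℕ} {n : ℕ} (hk : k ∈ S.piAntidiag n) :
    ∑ j, ((k j : ℤ) + e j) = n + ∑ j, e j := by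
  rw [sum_add_distrib, ← Nat.cast_sum, sum_eq_of_mem_piAntidiag hk]

theorem multinomialSeries_eq_zero_of_neg {i : Fin d} (hi : i ∉ S) (he : e i < 0) :
    multinomialSeries S e p = 0 := by
  ext n
  rw [coeff_multinomialSeries, map_zero]
  refine sum_eq_zero fun k hk => ?_
  have hki : k i = 0 := by_contra fun h => hi ((mem_piAntidiag.1 hk).2 i h)
  rw [intMultinomial_eq_zero_of_neg (i := i) (by simp [hki, he]), Nat.cast_zero, mul_zero]

theorem multinomialSeries_C (c : R) :
    multinomialSeries S e (MvPolynomial.C c) = C c * multinomialSeries S e 1 := by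
  ext n
  simp [coeff_multinomialSeries, mul_sum]

theorem multinomialSeries_add :
    multinomialSeries S e (p + q) = multinomialSeries S e p + multinomialSeries S e q := by
  ext n
  simp [coeff_multinomialSeries, add_mul, sum_add_distrib]

theorem multinomialSeries_mul_X (i : Fin d) :
    multinomialSeries S e (p * MvPolynomial.X i) =
      (mk fun n => ((n : R) + ((∑ j, e j : ℤ) : R)) *
        coeff n (multinomialSeries S (e - Pi.single i 1) p))
      - C (e i : R) * multinomialSeries S e p := by
  ext n
  simp only [map_sub, coeff_mk, coeff_C_mul, coeff_multinomialSeries, mul_sum, ← sum_sub_distrib]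
  refine sum_congr rfl fun k hk => ?_
  have key := congrArg (Int.cast : ℤ → R) (mul_intMultinomial (fun j => (k j : ℤ) + e j) i)
  rw [sum_natCast_add_eq_of_mem_piAntidiag hk] at key
  have hshift : (fun j => (k j : ℤ) + (e - Pi.single i 1 : Fin d → ℤ) j)
      = (fun j => (k j : ℤ) + e j) - Pi.single i 1 := by
    ext j
    simp [add_sub_assoc]
  rw [hshift, map_mul, MvPolynomial.eval_X]
  push_cast at key ⊢
  linear_combination (MvPolynomial.eval (fun j => (k j : R)) p) * key

theorem coeff_multinomialSeries_one_eq_sum {n : ℕ} (hn : (n : ℤ) + ∑ j, e j ≠ 0) :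
    coeff n (multinomialSeries S e (1 : MvPolynomial (Fin d) R))
      = ∑ i, coeff n (multinomialSeries S (e - Pi.single i 1) 1) := by
  simp only [coeff_multinomialSeries, map_one, one_mul]
  rw [sum_comm]
  refine sum_congr rfl fun k hk => ?_
  rw [intMultinomial_eq_sum_sub_single (by rwa [sum_natCast_add_eq_of_mem_piAntidiag hk]),
    Nat.cast_sum]
  refine sum_congr rfl fun i _ => ?_
  congr 2
  ext j
  simp [add_sub_assoc]

theorem coeff_succ_multinomialSeries_one_of_mem {i : Fin d} (hi : i ∈ S) (n : ℕ) :
    coeff (n + 1) (multinomialSeries S e (1 : MvPolynomial (Fin d) R))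
      = coeff (n + 1) (multinomialSeries (S.erase i) e 1)
        + coeff n (multinomialSeries S (e + Pi.single i 1) 1) := by
  simp only [coeff_multinomialSeries, map_one, one_mul]
  rw [sum_piAntidiag_succ hi]
  congr 1
  refine sum_congr rfl fun k _ => ?_
  congr 2
  ext j
  rcases eq_or_ne j i with rfl | hji
  · simp
    ring
  · simp [hji]

theorem coeff_succ_one_sub_card_mul_multinomialSeries_one {n : ℕ}
    (hn : (n + 1 : ℤ) + ∑ j, e j ≠ 0) :
    coeff (n + 1) (((1 - Polynomial.C (#S : R) * Polynomial.X : R[X]) : R⟦X⟧)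
        * multinomialSeries S e 1)
      = ∑ i ∈ S, coeff (n + 1) (multinomialSeries (S.erase i) (e - Pi.single i 1) 1)
        + ∑ i ∈ Sᶜ, coeff (n + 1) (multinomialSeries S (e - Pi.single i 1) 1) := by
  push_cast
  rw [sub_mul, one_mul, map_sub, mul_assoc, coeff_C_mul, coeff_succ_X_mul,
    coeff_multinomialSeries_one_eq_sum (by exact_mod_cast hn), ← sum_add_sum_compl S,
    sum_congr rfl fun i hi => coeff_succ_multinomialSeries_one_of_mem hi n, sum_add_distrib]
  simp only [sub_add_cancel, sum_const, nsmul_eq_mul]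
  ring

end MultinomialSeries

section

variable {R : Type*} [CommRing R] {d : ℕ}

theorem multinomialSeries_one_mem_withDenomIn (S : Finset (Fin d)) (e : Fin d → ℤ) :
    multinomialSeries S e (1 : MvPolynomial (Fin d) R) ∈ withDenomIn (poleFactors R #S) := by
  induction S using Finset.strongInduction generalizing e with
  | H S ihS =>
  induction hμ : ∑ i ∈ Sᶜ, (e i).toNat using Nat.strong_induction_on generalizing e with
  | _ μ ihμ =>
  have hS : ∀ i ∈ S, multinomialSeries (S.erase i) (e - Pi.single i 1) (1 : MvPolynomial (Fin d) R)
      ∈ withDenomIn (poleFactors R #S) := fun i hi =>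
    withDenomIn_mono (poleFactors_mono card_erase_le) (ihS _ (erase_ssubset hi) _)
  have hSc : ∀ i ∈ Sᶜ, multinomialSeries S (e - Pi.single i 1) (1 : MvPolynomial (Fin d) R)
      ∈ withDenomIn (poleFactors R #S) := by
    intro i hi
    rcases lt_or_ge (e i) 1 with he | he
    · rw [multinomialSeries_eq_zero_of_neg (mem_compl.1 hi) (by simpa using he)]
      exact zero_mem _
    · refine ihμ _ (hμ ▸ sum_lt_sum (fun j _ => ?_) ⟨i, hi, ?_⟩) _ rfl
      · rcases eq_or_ne j i with rfl | hji
        · simp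
        · simp [hji]
      · simp
        omega
  refine mem_withDenomIn_of_mul_mem (one_sub_C_mul_X_mem_poleFactors #S) ?_
  rw [← sub_add_cancel (_ * _) (∑ i ∈ S, multinomialSeries (S.erase i) (e - Pi.single i 1) 1
    + ∑ i ∈ Sᶜ, multinomialSeries S (e - Pi.single i 1) 1)]
  refine add_mem (mem_withDenomIn_of_coeff_eq_zero (N := (-∑ j, e j).toNat + 1) fun n hn => ?_)
    (add_mem (sum_mem hS) (sum_mem hSc))
  obtain ⟨n, rfl⟩ : ∃ m, n = m + 1 := ⟨n - 1, by omega⟩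
  rw [map_sub, map_add, map_sum, map_sum,
    coeff_succ_one_sub_card_mul_multinomialSeries_one (by omega), sub_self]

theorem multinomialSeries_mem_withDenomIn (S : Finset (Fin d)) (p : MvPolynomial (Fin d) R)
    (e : Fin d → ℤ) : multinomialSeries S e p ∈ withDenomIn (poleFactors R #S) := by
  induction p using MvPolynomial.induction_on generalizing e with
  | C c =>
    rw [multinomialSeries_C]
    exact C_mul_mem_withDenomIn c (multinomialSeries_one_mem_withDenomIn S e)
  | add p q hp hq =>
    rw [multinomialSeries_add]
    exact add_mem (hp e) (hq e)
  | mul_X p i hp =>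
    rw [multinomialSeries_mul_X]
    refine sub_mem ?_ (C_mul_mem_withDenomIn _ (hp e))
    convert mk_eval_mul_coeff_mem_withDenomIn (Polynomial.X + Polynomial.C ((∑ j, e j : ℤ) : R))
      (hp (e - Pi.single i 1)) using 4
    rw [Polynomial.eval_add, Polynomial.eval_X, Polynomial.eval_C]

end

theorem multinomial_generating_series_rational_general (d : ℕ) (e : Fin d → ℤ)
    (p : MvPolynomial (Fin d) ℚ) :
    ∃ (m : Fin d → ℕ) (P : Polynomial ℚ),
      (∏ a : Fin d, (1 - PowerSeries.C (((a : ℕ) + 1 : ℕ) : ℚ) * PowerSeries.X) ^ (m a)) *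
        (PowerSeries.mk fun n : ℕ =>
          ∑ k ∈ (Fintype.piFinset fun _ : Fin d => Finset.range (n + 1)).filter
              (fun k : Fin d → ℕ => ∑ i, k i = n),
            MvPolynomial.eval (fun i => (k i : ℚ)) p *
              (intMultinomial (fun i => (k i : ℤ) + e i) : ℚ)) = (P : PowerSeries ℚ) := by
  have h := multinomialSeries_mem_withDenomIn univ p e
  rw [card_univ, Fintype.card_fin] at h
  obtain ⟨q, hq, P, hP⟩ := h
  obtain ⟨m, hm⟩ := exists_prod_eq_of_mem_poleFactors hq
  refine ⟨m, P, ?_⟩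
  simp only [Fintype.filter_piFinset_range_sum_eq_piAntidiag]
  rw [← hm, ← hP]
  rfl

/-- For a positive integer `d`, `e ∈ ℤ^d` and a polynomial `p` in `d` variables over `ℚ`, the
series `∑_{k ∈ ℕ^d} p(k) C_{k+e} t^{|k|}` is a rational function of `t` with poles only at
`t = 1/a` for integers `1 ≤ a ≤ d`: multiplying it by suitable powers of the factors
`(1 − a t)`, `1 ≤ a ≤ d`, yields a polynomial. -/
theorem multinomial_generating_series_rational (d : ℕ) (hd : 0 < d) (e : Fin d → ℤ)
    (p : MvPolynomial (Fin d) ℚ) :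
    ∃ (m : Fin d → ℕ) (P : Polynomial ℚ),
      (∏ a : Fin d, (1 - PowerSeries.C (((a : ℕ) + 1 : ℕ) : ℚ) * PowerSeries.X) ^ (m a)) *
        (PowerSeries.mk fun n : ℕ =>
          ∑ k ∈ (Fintype.piFinset fun _ : Fin d => Finset.range (n + 1)).filter
              (fun k : Fin d → ℕ => ∑ i, k i = n),
            MvPolynomial.eval (fun i => (k i : ℚ)) p *
              (intMultinomial (fun i => (k i : ℤ) + e i) : ℚ)) = (P : PowerSeries ℚ) :=
  multinomial_generating_series_rational_general d e p
end

section
/- Let B be a commutative ring on which a finite group G acts by ring automorphisms, and let A = B^G be the ring of invariants. Let f ∈ A[[t]] be a power series which, regarded as an element of B[[t]], is rational. Then f is rational as an element of A[[t]]. -/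
/-- A power series over a commutative ring `A` is rational if there is a polynomial `q` with
constant term `1` such that `q·f` is a polynomial. -/
def IsRationalSeries {A : Type*} [CommRing A] (f : PowerSeries A) : Prop :=
  ∃ q p : Polynomial A, q.coeff 0 = 1 ∧ (q : PowerSeries A) * f = (p : PowerSeries A)

/-- The subring of invariants `B^G` of a group `G` acting on a ring `B` by ring
automorphisms. -/
def fixedSubring (G B : Type*) [Group G] [Ring B] [MulSemiringAction G B] : Subring B where
  carrier := MulAction.fixedPoints G B
  one_mem' := fun g => smul_one g
  mul_mem' := fun {a b} ha hb g => by
    rw [smul_mul', ha g, hb g]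
  add_mem' := fun {a b} ha hb g => by
    rw [smul_add, ha g, hb g]
  zero_mem' := fun g => smul_zero g
  neg_mem' := fun {a} ha g => by
    rw [smul_neg, ha g]

/-!
If `q f = p` over `B`, replace `q` by its norm `Q = ∏_{g ∈ G} g • q`. It is `G`-invariant, so it
has coefficients in `A = B^G`, its constant term is still `1`, and it is a multiple `r q` of `q`,
so `Q f = r p` is a polynomial. Its coefficients are those of `Q f`, which lie in `A` because
`Q` and `f` do.
-/

open Polynomial

theorem PowerSeries.exists_coe_eq_of_map_eq_coe {A B : Type*} [CommSemiring A] [CommSemiring B]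
    {φ : A →+* B} (hφ : Function.Injective φ) {F : PowerSeries A} {P : B[X]}
    (h : PowerSeries.map φ F = P) : ∃ Pa : A[X], (Pa : PowerSeries A) = F := by
  have hP : P ∈ lifts φ := (lifts_iff_coeff_lifts P).2 fun n ↦
    ⟨PowerSeries.coeff n F, by rw [← Polynomial.coeff_coe, ← h, PowerSeries.coeff_map]⟩
  obtain ⟨Pa, rfl⟩ := (mem_lifts P).1 hP
  exact ⟨Pa, PowerSeries.map_injective φ hφ (by rw [← polynomial_map_coe, h])⟩

theorem IsRationalSeries.of_map {A B : Type*} [CommRing A] [CommRing B] {φ : A →+* B}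
    (hφ : Function.Injective φ) {f : PowerSeries A} {Q P : B[X]} (hQ : Q ∈ lifts φ)
    (hQ0 : Q.coeff 0 = 1) (h : (Q : PowerSeries B) * PowerSeries.map φ f = P) :
    IsRationalSeries f := by
  obtain ⟨Qa, rfl⟩ := (mem_lifts Q).1 hQ
  obtain ⟨Pa, hPa⟩ := PowerSeries.exists_coe_eq_of_map_eq_coe hφ
    (F := (Qa : PowerSeries A) * f) (by rw [map_mul, ← polynomial_map_coe, h])
  refine ⟨Qa, Pa, hφ ?_, hPa.symm⟩
  rw [← coeff_map, hQ0, map_one]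

theorem Polynomial.mem_lifts_fixedSubring {G B : Type*} [Group G] [Ring B]
    [MulSemiringAction G B] {Q : B[X]} (hQ : ∀ g : G, g • Q = Q) :
    Q ∈ lifts (fixedSubring G B).subtype :=
  (lifts_iff_coeff_lifts Q).2 fun n ↦
    ⟨⟨Q.coeff n, fun g ↦ by rw [← coeff_smul, hQ g]⟩, rfl⟩

theorem Polynomial.coeff_zero_prod_smul {G B : Type*} [Monoid G] [Fintype G] [CommSemiring B]
    [MulSemiringAction G B] {q : B[X]} (hq : q.coeff 0 = 1) :
    (∏ g : G, g • q).coeff 0 = 1 := by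
  simp [coeff_zero_prod, coeff_smul, hq]

/-- Let a finite group `G` act on a commutative ring `B` by ring automorphisms, with invariant
ring `A = B^G`.  A power series over `A` which is rational as a power series over `B` is
already rational over `A`. -/
theorem rational_over_invariants_of_rational
    (G B : Type*) [Group G] [Finite G] [CommRing B] [MulSemiringAction G B]
    (f : PowerSeries (fixedSubring G B))
    (hf : IsRationalSeries (PowerSeries.map (fixedSubring G B).subtype f)) :
    IsRationalSeries f := by
  classical
  cases nonempty_fintype G
  obtain ⟨q, p, hq0, hqp⟩ := hf
  obtain ⟨r, hr⟩ : q ∣ ∏ g : G, g • q := by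
    simpa using Finset.dvd_prod_of_mem (· • q) (Finset.mem_univ (1 : G))
  refine IsRationalSeries.of_map Subtype.val_injective (P := r * p)
    (mem_lifts_fixedSubring (Finset.smul_prod_perm q)) (coeff_zero_prod_smul hq0) ?_
  rw [hr, coe_mul, mul_comm (q : PowerSeries B), mul_assoc, hqp, coe_mul]
end

section
/- Let A ⊆ B be an inclusion of fields and let f ∈ A[[t]] be a power series which, regarded as an element of B[[t]], is rational. Then f is rational as an element of A[[t]]. -/
open PowerSeries

namespace PowerSeries

variable {R S : Type*} [CommSemiring R] [Semiring S] [Algebra R S]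

noncomputable def mapLinear (φ : S →ₗ[R] R) (F : S⟦X⟧) : R⟦X⟧ :=
  mk fun n => φ (coeff n F)

@[simp]
theorem coeff_mapLinear (φ : S →ₗ[R] R) (F : S⟦X⟧) (n : ℕ) :
    coeff n (mapLinear φ F) = φ (coeff n F) :=
  coeff_mk _ _

theorem mapLinear_mul_map (φ : S →ₗ[R] R) (F : S⟦X⟧) (f : R⟦X⟧) :
    mapLinear φ (F * map (algebraMap R S) f) = mapLinear φ F * f := by
  ext n
  simp only [coeff_mapLinear, coeff_mul, map_sum, coeff_map]
  refine Finset.sum_congr rfl fun ij _ => ?_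
  rw [← Algebra.commutes, ← Algebra.smul_def, map_smul, smul_eq_mul, mul_comm]

end PowerSeries

namespace Polynomial

variable {R S : Type*} [CommSemiring R] [Semiring S] [Algebra R S]

noncomputable def mapLinear (φ : S →ₗ[R] R) (p : S[X]) : R[X] :=
  p.sum fun n a => monomial n (φ a)

@[simp]
theorem coeff_mapLinear (φ : S →ₗ[R] R) (p : S[X]) (n : ℕ) :
    (p.mapLinear φ).coeff n = φ (p.coeff n) := by
  simp only [mapLinear, Polynomial.sum, finsetSum_coeff, coeff_monomial, Finset.sum_ite_eq']
  split_ifs with h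
  · rfl
  · rw [notMem_support_iff.mp h, map_zero]

@[simp]
theorem coe_mapLinear (φ : S →ₗ[R] R) (p : S[X]) :
    (p.mapLinear φ : R⟦X⟧) = PowerSeries.mapLinear φ p := by
  ext n
  simp

end Polynomial

theorem IsRationalSeries.of_map_s14 {R S : Type*} [CommRing R] [CommRing S] [Algebra R S]
    (φ : S →ₗ[R] R) (hφ : φ 1 = 1) {f : R⟦X⟧}
    (hf : IsRationalSeries (map (algebraMap R S) f)) : IsRationalSeries f := by
  obtain ⟨q, p, hq, hqf⟩ := hf
  refine ⟨q.mapLinear φ, p.mapLinear φ, by rw [Polynomial.coeff_mapLinear, hq, hφ], ?_⟩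
  rw [Polynomial.coe_mapLinear, Polynomial.coe_mapLinear, ← mapLinear_mul_map, hqf]

/-- Let `A ⊆ B` be an inclusion of fields.  A power series over `A` which becomes rational
when regarded as a power series over `B` is already rational over `A`. -/
theorem rational_over_subfield_of_rational
    (A B : Type*) [Field A] [Field B] [Algebra A B]
    (f : PowerSeries A)
    (hf : IsRationalSeries (PowerSeries.map (algebraMap A B) f)) :
    IsRationalSeries f := by
  obtain ⟨φ, hφ⟩ := Module.Projective.exists_dual_eq_one A (one_ne_zero : (1 : B) ≠ 0)
  exact hf.of_map_s14 φ hφ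
end
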